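/- arXiv:1803.00239 — 11 statements merged into one kernel-verified Lean document; each statement's English description precedes it below -/
import Mathlib

section
/- Let (C,R,𝔳) and (C,R̂,𝔳̂) be Hamming ring extensions of rank m over a commutative ring C, with representation maps M_R and M_{R̂}, and let Θ : R → R̂ be a ring anti-isomorphism satisfying M_{R̂}(Θ(f)) = (M_R(f))ᵀ for all f ∈ R. Let f, h ∈ R and set 𝒞 = 𝔳(Rf). Then the right annihilator of Rf in R equals hR if and only if the dual code 𝒞^⊥ equals 𝔳̂(R̂·Θ(h)). -/
open Matrix

/-!
The right annihilator of `Rf` is the right annihilator `{s | f * s = 0}` of `f`, and the dual of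
`𝔳(Rf)` is the kernel of `w ↦ M_R(f) *ᵥ w`. Transposition and `Θ` turn this kernel into
`𝔳̂` of the left annihilator of `Θ f` in `R̂`, while `Θ` maps `hR` onto `R̂ Θ(h)`. As `𝔳̂ ∘ Θ` is
injective, the two equalities of sets are equivalent.
-/

theorem setOf_forall_mul_mul_eq_zero {R : Type*} [Ring R] (f : R) :
    {s : R | ∀ x : R, x * f * s = 0} = {s : R | f * s = 0} := by
  ext s
  exact ⟨fun H => by simpa using H 1, fun H x => by rw [mul_assoc, H, mul_zero]⟩

section Representation

variable {C R ι : Type*} [CommRing C] [Ring R] [Module C R] [Fintype ι]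
  (v : R ≃ₗ[C] (ι → C)) (M : R → Matrix ι ι C)

theorem setOf_forall_dotProduct_mul_eq_zero [DecidableEq ι]
    (hM : ∀ f g : R, v (g * f) = v g ᵥ* M f) (f : R) :
    {w : ι → C | ∀ g : R, w ⬝ᵥ v (g * f) = 0} = {w | M f *ᵥ w = 0} := by
  have hdot : ∀ (w : ι → C) (g : R), w ⬝ᵥ v (g * f) = v g ⬝ᵥ M f *ᵥ w := fun w g => by
    rw [hM, dotProduct_comm, ← dotProduct_mulVec]
  ext w
  simp only [Set.mem_ofPred_eq, hdot]
  refine ⟨fun H => funext fun i => ?_, fun H g => by rw [H, dotProduct_zero]⟩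
  simpa using H (v.symm (Pi.single i 1))

theorem image_setOf_mul_eq_zero (hM : ∀ f g : R, v (g * f) = v g ᵥ* M f) (a : R) :
    v '' {g : R | g * a = 0} = {w | w ᵥ* M a = 0} := by
  ext w
  rw [v.image_eq_preimage_symm, Set.mem_preimage, Set.mem_ofPred_eq, Set.mem_ofPred_eq,
    ← v.map_eq_zero_iff, hM, v.apply_symm_apply]

end Representation

section AntiBijection

variable {R S : Type*} [Ring R] [Ring S] {Θ : R → S}

theorem image_setOf_mul_eq_zero_of_antiBijective (hΘsurj : Function.Surjective Θ)
    (hΘmul : ∀ a b : R, Θ (a * b) = Θ b * Θ a) (hΘinj : Function.Injective Θ) (hΘzero : Θ 0 = 0) (f : R) :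
    Θ '' {s : R | f * s = 0} = {g : S | g * Θ f = 0} := by
  ext g
  obtain ⟨s, rfl⟩ := hΘsurj g
  rw [hΘinj.mem_set_image, Set.mem_ofPred_eq, Set.mem_ofPred_eq, ← hΘmul, ← hΘzero,
    hΘinj.eq_iff]

theorem image_setOf_eq_mul_of_antiSurjective (hΘsurj : Function.Surjective Θ)
    (hΘmul : ∀ a b : R, Θ (a * b) = Θ b * Θ a) (h : R) :
    Θ '' {s : R | ∃ r : R, s = h * r} = Set.range (· * Θ h) := by
  ext g
  constructor
  · rintro ⟨_, ⟨r, rfl⟩, rfl⟩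
    exact ⟨Θ r, (hΘmul h r).symm⟩
  · rintro ⟨g, rfl⟩
    obtain ⟨r, rfl⟩ := hΘsurj g
    exact ⟨h * r, ⟨r, rfl⟩, hΘmul h r⟩

end AntiBijection

theorem stmt1_general {C R Rh : Type*} [CommRing C] [Ring R] [Ring Rh] (m : ℕ)
    [Module C R] [Module C Rh]
    (v : R ≃ₗ[C] (Fin m → C)) (vh : Rh ≃ₗ[C] (Fin m → C))
    (MR : R → Matrix (Fin m) (Fin m) C) (Mh : Rh → Matrix (Fin m) (Fin m) C)
    (hMR : ∀ f g : R, v (g * f) = Matrix.vecMul (v g) (MR f))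
    (hMh : ∀ f g : Rh, vh (g * f) = Matrix.vecMul (vh g) (Mh f))
    (Θ : R → Rh) (hΘbij : Function.Bijective Θ)
    (hΘadd : ∀ a b : R, Θ (a + b) = Θ a + Θ b)
    (hΘmul : ∀ a b : R, Θ (a * b) = Θ b * Θ a)
    (htr : ∀ f : R, Mh (Θ f) = (MR f)ᵀ)
    (f h : R) :
    ({s : R | ∀ x : R, (x * f) * s = 0} = {s : R | ∃ r : R, s = h * r}) ↔
      ({w : Fin m → C | ∀ g : R, dotProduct w (v (g * f)) = 0}
        = Set.range fun g : Rh => vh (g * Θ h)) := by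
  have hΘzero : Θ 0 = 0 := by simpa using hΘadd 0 0
  have hdual : {w : Fin m → C | ∀ g : R, w ⬝ᵥ v (g * f) = 0}
      = vh '' (Θ '' {s | f * s = 0}) := by
    rw [setOf_forall_dotProduct_mul_eq_zero v MR hMR,
      image_setOf_mul_eq_zero_of_antiBijective hΘbij.2 hΘmul hΘbij.1 hΘzero,
      image_setOf_mul_eq_zero vh Mh hMh, htr]
    simp only [vecMul_transpose]
  have hcode : (Set.range fun g : Rh => vh (g * Θ h)) = vh '' (Θ '' {s | ∃ r, s = h * r}) := by
    rw [image_setOf_eq_mul_of_antiSurjective hΘbij.2 hΘmul, ← Set.range_comp]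
    rfl
  rw [setOf_forall_mul_mul_eq_zero, hdual, hcode, vh.injective.image_injective.eq_iff,
    hΘbij.1.image_injective.eq_iff]

/-- For transposed Hamming ring extensions `(C,R,𝔳)` and `(C,R̂,𝔳̂)` with
anti-isomorphism `Θ` satisfying `M_{R̂}(Θ f) = (M_R f)ᵀ`, and `𝒞 = 𝔳(Rf)`:
the right annihilator of `Rf` equals `hR` iff `𝒞^⊥ = 𝔳̂(R̂·Θ(h))`. -/
theorem stmt1 {C R Rh : Type*} [CommRing C] [Ring R] [Ring Rh] (m : ℕ)
    (ι : C →+* R) (hι : Function.Injective ι)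
    (ιh : C →+* Rh) (hιh : Function.Injective ιh)
    [Module C R] [Module C Rh]
    (hsmul : ∀ (c : C) (r : R), c • r = ι c * r)
    (hsmulh : ∀ (c : C) (r : Rh), c • r = ιh c * r)
    (v : R ≃ₗ[C] (Fin m → C)) (vh : Rh ≃ₗ[C] (Fin m → C))
    (MR : R → Matrix (Fin m) (Fin m) C) (Mh : Rh → Matrix (Fin m) (Fin m) C)
    (hMR : ∀ f g : R, v (g * f) = Matrix.vecMul (v g) (MR f))
    (hMh : ∀ f g : Rh, vh (g * f) = Matrix.vecMul (vh g) (Mh f))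
    (Θ : R → Rh) (hΘbij : Function.Bijective Θ)
    (hΘadd : ∀ a b : R, Θ (a + b) = Θ a + Θ b)
    (hΘmul : ∀ a b : R, Θ (a * b) = Θ b * Θ a)
    (hΘone : Θ 1 = 1)
    (htr : ∀ f : R, Mh (Θ f) = (MR f)ᵀ)
    (f h : R) :
    ({s : R | ∀ x : R, (x * f) * s = 0} = {s : R | ∃ r : R, s = h * r}) ↔
      ({w : Fin m → C | ∀ g : R, dotProduct w (v (g * f)) = 0}
        = Set.range fun g : Rh => vh (g * Θ h)) :=
  stmt1_general m v vh MR Mh hMR hMh Θ hΘbij hΘadd hΘmul htr f h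
end

section
/- With the notation of the transpose Hamming extension setup, if 𝒞 = 𝔳(Rf) satisfies 𝒞^{⊥⊥} = 𝒞 and the right annihilator of Rf in R equals hR, then the left annihilator of hR in R equals Rf. -/
/-! Since `M_{R̂}(Θ b) = M_R(b)ᵀ`, right multiplication by `b` on `R` is adjoint to right
multiplication by `Θ b` on `R̂` for the pairing `⟨v a, v̂ t⟩`, so `𝔳(Rf)^⊥` is `v̂` of the left annihilator of `Θ f`,
which the hypothesis on the right annihilator of `Rf` identifies with `R̂ · Θ h`. An `s` with
`s h = 0` is therefore orthogonal to `𝔳(Rf)^⊥`, hence lies in `𝔳(Rf)^⊥⊥ = 𝔳(Rf)`; conversely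
`f h = 0`, so `Rf` kills `hR`. -/

open Matrix

/-- The dual of a `C`-linear code `S ⊆ C^m`. -/
def dualCode {C : Type*} [CommRing C] {m : ℕ} (S : Set (Fin m → C)) : Set (Fin m → C) :=
  {w | ∀ u ∈ S, dotProduct w u = 0}

section TransposedPairing

variable {C R Rh : Type*} [CommRing C] [Ring R] [Ring Rh] [Module C R] [Module C Rh] {m : ℕ}
  {v : R ≃ₗ[C] (Fin m → C)} {vh : Rh ≃ₗ[C] (Fin m → C)} {Θ : R → Rh}

theorem dotProduct_mul_eq_dotProduct_mul_anti
    {MR : R → Matrix (Fin m) (Fin m) C} {Mh : Rh → Matrix (Fin m) (Fin m) C}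
    (hMR : ∀ f g : R, v (g * f) = v g ᵥ* MR f) (hMh : ∀ f g : Rh, vh (g * f) = vh g ᵥ* Mh f)
    (htr : ∀ f : R, Mh (Θ f) = (MR f)ᵀ) (a b : R) (t : Rh) :
    v (a * b) ⬝ᵥ vh t = v a ⬝ᵥ vh (t * Θ b) := by
  rw [hMR, hMh, htr, vecMul_transpose, dotProduct_mulVec]

theorem mem_dualCode_range_mul_right_iff
    (hpair : ∀ (a b : R) (t : Rh), v (a * b) ⬝ᵥ vh t = v a ⬝ᵥ vh (t * Θ b))
    (f : R) (w : Fin m → C) :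
    w ∈ dualCode (Set.range fun g : R => v (g * f)) ↔ vh.symm w * Θ f = 0 := by
  have hw : ∀ g : R, w ⬝ᵥ v (g * f) = v g ⬝ᵥ vh (vh.symm w * Θ f) := fun g => by
    rw [dotProduct_comm, ← hpair, vh.apply_symm_apply]
  simp only [dualCode, Set.mem_ofPred_eq, Set.forall_mem_range, hw]
  rw [← map_eq_zero_iff vh vh.injective, ← dotProduct_eq_zero_iff]
  simp_rw [dotProduct_comm (vh _)]
  exact (v.surjective.forall (p := fun u => u ⬝ᵥ vh (vh.symm w * Θ f) = 0)).symm

end TransposedPairing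

section AntiMultiplicative

variable {R Rh : Type*} [Ring R] [Ring Rh] {Θ : R → Rh}

theorem map_zero_of_surjective_of_anti (hsurj : Function.Surjective Θ)
    (hΘmul : ∀ a b : R, Θ (a * b) = Θ b * Θ a) : Θ 0 = 0 := by
  obtain ⟨a, ha⟩ := hsurj 0
  rw [← zero_mul a, hΘmul, ha, zero_mul]

theorem exists_eq_mul_map_of_mul_map_eq_zero (hΘbij : Function.Bijective Θ)
    (hΘmul : ∀ a b : R, Θ (a * b) = Θ b * Θ a) {f h : R}
    (hrann : ∀ s : R, f * s = 0 → ∃ r, s = h * r) {t : Rh} (ht : t * Θ f = 0) :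
    ∃ q : Rh, t = q * Θ h := by
  obtain ⟨s, rfl⟩ := hΘbij.2 t
  have hfs : f * s = 0 := by
    apply hΘbij.1
    rw [hΘmul, ht, map_zero_of_surjective_of_anti hΘbij.2 hΘmul]
  obtain ⟨r, rfl⟩ := hrann s hfs
  exact ⟨Θ r, hΘmul h r⟩

end AntiMultiplicative

theorem stmt2_general {C R Rh : Type*} [CommRing C] [Ring R] [Ring Rh] (m : ℕ)
    [Module C R] [Module C Rh]
    (v : R ≃ₗ[C] (Fin m → C)) (vh : Rh ≃ₗ[C] (Fin m → C))
    (MR : R → Matrix (Fin m) (Fin m) C) (Mh : Rh → Matrix (Fin m) (Fin m) C)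
    (hMR : ∀ f g : R, v (g * f) = Matrix.vecMul (v g) (MR f))
    (hMh : ∀ f g : Rh, vh (g * f) = Matrix.vecMul (vh g) (Mh f))
    (Θ : R → Rh) (hΘbij : Function.Bijective Θ)
    (hΘmul : ∀ a b : R, Θ (a * b) = Θ b * Θ a)
    (htr : ∀ f : R, Mh (Θ f) = (MR f)ᵀ)
    (f h : R)
    (hbidual : dualCode (dualCode (Set.range fun g : R => v (g * f)))
      = Set.range fun g : R => v (g * f))
    (hann : {s : R | ∀ x : R, (x * f) * s = 0} = {s : R | ∃ r : R, s = h * r}) :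
    {s : R | ∀ x : R, s * (h * x) = 0} = {s : R | ∃ g : R, s = g * f} := by
  have hpair := dotProduct_mul_eq_dotProduct_mul_anti hMR hMh htr
  have hrann : ∀ s : R, f * s = 0 → ∃ r, s = h * r := fun s hs => by
    have hs' : s ∈ {s : R | ∀ x : R, (x * f) * s = 0} := fun x => by rw [mul_assoc, hs, mul_zero]
    rwa [hann] at hs'
  have hfh : f * h = 0 := by
    have hh : h ∈ {s : R | ∃ r : R, s = h * r} := ⟨1, (mul_one h).symm⟩
    rw [← hann] at hh
    simpa using hh 1
  ext s
  constructor
  · intro hs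
    have hsh : s * h = 0 := by simpa using hs 1
    have hmem : v s ∈ dualCode (dualCode (Set.range fun g : R => v (g * f))) := fun w hw => by
      obtain ⟨q, hq⟩ := exists_eq_mul_map_of_mul_map_eq_zero hΘbij hΘmul hrann
        ((mem_dualCode_range_mul_right_iff hpair f w).1 hw)
      rw [← vh.apply_symm_apply w, hq, ← hpair, hsh, map_zero, zero_dotProduct]
    rw [hbidual] at hmem
    obtain ⟨g, hg⟩ := hmem
    exact ⟨g, v.injective hg.symm⟩
  · rintro ⟨g, rfl⟩ x
    rw [mul_assoc, ← mul_assoc f, hfh, zero_mul, mul_zero]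

/-- In the transpose Hamming extension setup, if `𝒞 = 𝔳(Rf)` satisfies
`𝒞^{⊥⊥} = 𝒞` and the right annihilator of `Rf` equals `hR`, then the left annihilator
of `hR` equals `Rf`. -/
theorem stmt2 {C R Rh : Type*} [CommRing C] [Ring R] [Ring Rh] (m : ℕ)
    (ι : C →+* R) (hι : Function.Injective ι)
    (ιh : C →+* Rh) (hιh : Function.Injective ιh)
    [Module C R] [Module C Rh]
    (hsmul : ∀ (c : C) (r : R), c • r = ι c * r)
    (hsmulh : ∀ (c : C) (r : Rh), c • r = ιh c * r)
    (v : R ≃ₗ[C] (Fin m → C)) (vh : Rh ≃ₗ[C] (Fin m → C))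
    (MR : R → Matrix (Fin m) (Fin m) C) (Mh : Rh → Matrix (Fin m) (Fin m) C)
    (hMR : ∀ f g : R, v (g * f) = Matrix.vecMul (v g) (MR f))
    (hMh : ∀ f g : Rh, vh (g * f) = Matrix.vecMul (vh g) (Mh f))
    (Θ : R → Rh) (hΘbij : Function.Bijective Θ)
    (hΘadd : ∀ a b : R, Θ (a + b) = Θ a + Θ b)
    (hΘmul : ∀ a b : R, Θ (a * b) = Θ b * Θ a)
    (hΘone : Θ 1 = 1)
    (htr : ∀ f : R, Mh (Θ f) = (MR f)ᵀ)
    (f h : R)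
    (hbidual : dualCode (dualCode (Set.range fun g : R => v (g * f)))
      = Set.range fun g : R => v (g * f))
    (hann : {s : R | ∀ x : R, (x * f) * s = 0} = {s : R | ∃ r : R, s = h * r}) :
    {s : R | ∀ x : R, s * (h * x) = 0} = {s : R | ∃ g : R, s = g * f} :=
  stmt2_general m v vh MR Mh hMR hMh Θ hΘbij hΘmul htr f h hbidual hann
end

section
/- Let A be a finite-dimensional F-algebra with F-automorphism σ and an involution θ : A → A (an anti-algebra homomorphism with θ² = id). Set σ̂ = θ∘σ^{-1}∘θ. Then the map Θ : A[z;σ] → A[z;σ̂] given by Θ(Σ_k z^k a_k) = Σ_k z^k θ(σ^{-k}(a_k)) is an anti-isomorphism of F-algebras. -/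
/-!
In coordinates `Θ` is the coefficientwise map `a ↦ θ (σ⁻¹^[k] a)` in degree `k`, so it is an
additive bijection. By biadditivity, anti-multiplicativity only has to be checked on monomials
`z^i a` and `z^j b`, where it reads
`θ (σ⁻¹^[i+j] (σ^[j] a * b)) = σ̂^[i] (θ (σ⁻¹^[j] b)) * θ (σ⁻¹^[i] a)`;
this holds because `θ` is an anti-homomorphism intertwining `σ⁻¹` with `σ̂ = θ ∘ σ⁻¹ ∘ θ`.
-/

namespace Finsupp

variable {α M N : Type*} [AddCommMonoid M] [AddCommMonoid N]

noncomputable def mapRangeFamily (e : α → M ≃+ N) : (α →₀ M) ≃+ (α →₀ N) where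
  toFun p := onFinset p.support (fun i => e i (p i)) fun i hi => by
    simpa using hi
  invFun q := onFinset q.support (fun i => (e i).symm (q i)) fun i hi => by
    simpa using hi
  left_inv p := by ext; simp
  right_inv q := by ext; simp
  map_add' p q := by ext; simp

variable (e : α → M ≃+ N)

@[simp]
theorem mapRangeFamily_apply (p : α →₀ M) (i : α) : mapRangeFamily e p i = e i (p i) := rfl

@[simp]
theorem support_mapRangeFamily (p : α →₀ M) : (mapRangeFamily e p).support = p.support := by
  ext; simp

@[simp]
theorem mapRangeFamily_single (i : α) (m : M) :
    mapRangeFamily e (single i m) = single i (e i m) := by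
  ext j
  rcases eq_or_ne i j with rfl | hij <;> simp [*]

end Finsupp

section SkewMonomial

variable {A R : Type*} [Semiring A] [Semiring R] {ι : A →+* R} {z : R} {τ : A → A}

theorem map_mul_pow_eq_pow_mul_map_iterate (hz : ∀ a, ι a * z = z * ι (τ a)) (k : ℕ) (a : A) :
    ι a * z ^ k = z ^ k * ι (τ^[k] a) := by
  induction k generalizing a with
  | zero => simp
  | succ k ih =>
    rw [pow_succ, ← mul_assoc, ih, mul_assoc, hz, Function.iterate_succ_apply', ← mul_assoc]

theorem pow_mul_map_mul_pow_mul_map (hz : ∀ a, ι a * z = z * ι (τ a)) (i j : ℕ) (a b : A) :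
    z ^ i * ι a * (z ^ j * ι b) = z ^ (i + j) * ι (τ^[j] a * b) := by
  rw [mul_assoc, ← mul_assoc (ι a), map_mul_pow_eq_pow_mul_map_iterate hz, mul_assoc, ← map_mul,
    ← mul_assoc, ← pow_add]

theorem apply_single_of_eq_sum (rep : (ℕ →₀ A) ≃+ R)
    (hrep : ∀ p, rep p = ∑ k ∈ p.support, z ^ k * ι (p k)) (k : ℕ) (a : A) :
    rep (Finsupp.single k a) = z ^ k * ι a :=
  (hrep _).trans (Finsupp.sum_single_index (h := fun k a => z ^ k * ι a) (by simp))

end SkewMonomial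

theorem map_mul_rev_of_single {α A R S : Type*} [AddCommMonoid A] [NonUnitalNonAssocSemiring R]
    [NonUnitalNonAssocSemiring S] (Φ : R →+ S) (rep : (α →₀ A) ≃+ R)
    (h : ∀ i j a b, Φ (rep (Finsupp.single i a) * rep (Finsupp.single j b)) =
      Φ (rep (Finsupp.single j b)) * Φ (rep (Finsupp.single i a)))
    (x y : R) : Φ (x * y) = Φ y * Φ x := by
  obtain ⟨p, rfl⟩ := rep.surjective x
  obtain ⟨q, rfl⟩ := rep.surjective y
  induction p using Finsupp.induction_linear with
  | zero => simp
  | add p₁ p₂ h₁ h₂ => simp only [map_add, add_mul, mul_add, h₁, h₂]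
  | single i a =>
    induction q using Finsupp.induction_linear with
    | zero => simp
    | add q₁ q₂ h₁ h₂ => simp only [map_add, add_mul, mul_add, h₁, h₂]
    | single j b => exact h i j a b

section Twist

variable {A : Type*} {θ ρ : A → A}

theorem iterate_involution_conj_apply (hθ : Function.Involutive θ) (n : ℕ) (a : A) :
    (fun b => θ (ρ (θ b)))^[n] (θ a) = θ (ρ^[n] a) :=
  ((Function.Semiconj.iterate_right (fun b => by simp only [hθ b]) n) a).symm

theorem involution_iterate_mul_eq [Mul A] (hθmul : ∀ a b, θ (a * b) = θ b * θ a)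
    (hθ : Function.Involutive θ) (hρmul : ∀ a b, ρ (a * b) = ρ a * ρ b) {σ : A → A}
    (hρσ : Function.LeftInverse ρ σ) (i j : ℕ) (a b : A) :
    θ (ρ^[i + j] (σ^[j] a * b)) = (fun b => θ (ρ (θ b)))^[i] (θ (ρ^[j] b)) * θ (ρ^[i] a) := by
  rw [Function.Semiconj₂.iterate hρmul, hθmul, iterate_involution_conj_apply hθ,
    Function.iterate_add_apply ρ i j, Function.iterate_add_apply ρ i j, hρσ.iterate j]

end Twist

theorem stmt4_general {F A R Rh : Type*} [Field F] [Ring A] [Algebra F A]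
    [Ring R] [Ring Rh]
    (σ : A ≃ₐ[F] A) (θ : A → A)
    (hθlin : ∀ (c : F) (a : A), θ (c • a) = c • θ a)
    (hθadd : ∀ a c : A, θ (a + c) = θ a + θ c)
    (hθmul : ∀ a c : A, θ (a * c) = θ c * θ a)
    (hθone : θ 1 = 1) (hθinv : ∀ a, θ (θ a) = a)
    (ι : A →+* R) (z : R) (hz : ∀ a, ι a * z = z * ι (σ a))
    (rep : (ℕ →₀ A) ≃+ R)
    (hrep : ∀ p, rep p = ∑ k ∈ p.support, z ^ k * ι (p k))
    (ι' : A →+* Rh) (z' : Rh)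
    (hz' : ∀ a, ι' a * z' = z' * ι' (θ (σ.symm (θ a))))
    (rep' : (ℕ →₀ A) ≃+ Rh)
    (hrep' : ∀ p, rep' p = ∑ k ∈ p.support, z' ^ k * ι' (p k)) :
    ∃ Θ : R → Rh,
      (∀ r : R, Θ r = ∑ k ∈ (rep.symm r).support,
          z' ^ k * ι' (θ ((⇑σ.symm)^[k] ((rep.symm r) k)))) ∧
      Function.Bijective Θ ∧
      (∀ a b : R, Θ (a + b) = Θ a + Θ b) ∧
      (∀ a b : R, Θ (a * b) = Θ b * Θ a) ∧
      Θ 1 = 1 ∧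
      (∀ c : F, Θ (ι (algebraMap F A c)) = ι' (algebraMap F A c)) := by
  let θe : A ≃+ A := AddEquiv.mk' (Function.Involutive.toPerm θ hθinv) hθadd
  let T := Finsupp.mapRangeFamily fun k => (σ.symm ^ k).toRingEquiv.toAddEquiv.trans θe
  have hT : ∀ p k, T p k = θ (σ.symm^[k] (p k)) := fun p k => by simp [T]; rfl
  let Θ : R ≃+ Rh := rep.symm.trans (T.trans rep')
  have hΘ : ∀ k a, Θ (z ^ k * ι a) = z' ^ k * ι' (θ (σ.symm^[k] a)) := by
    intro k a
    rw [← apply_single_of_eq_sum rep hrep, ← apply_single_of_eq_sum rep' hrep']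
    simp [Θ, T]
    rfl
  have hΘι : ∀ a, Θ (ι a) = ι' (θ a) := fun a => by simpa using hΘ 0 a
  refine ⟨Θ, fun r => ?_, Θ.bijective, map_add Θ, ?_, ?_, fun c => ?_⟩
  · change rep' (T (rep.symm r)) = _
    rw [hrep', Finsupp.support_mapRangeFamily]
    simp only [hT]
  · refine map_mul_rev_of_single Θ.toAddMonoidHom rep fun i j a b => ?_
    simp only [AddEquiv.coe_toAddMonoidHom, apply_single_of_eq_sum rep hrep]
    rw [pow_mul_map_mul_pow_mul_map hz, hΘ, hΘ, hΘ, pow_mul_map_mul_pow_mul_map hz', add_comm j i,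
      involution_iterate_mul_eq hθmul hθinv (map_mul σ.symm) σ.symm_apply_apply]
  · simpa [hθone] using hΘι 1
  · rw [hΘι, Algebra.algebraMap_eq_smul_one, hθlin, hθone]

/-- Given a finite-dimensional `F`-algebra `A` with automorphism `σ` and an
involution `θ` (F-linear anti-homomorphism with `θ² = id`), and setting `σ̂ = θ∘σ⁻¹∘θ`,
the map `Θ : A[z;σ] → A[z;σ̂]`, `Θ(Σ z^k a_k) = Σ z^k θ(σ^{-k}(a_k))`, is an
anti-isomorphism of `F`-algebras. The skew right polynomial rings are presented
abstractly: `R` (resp. `Rh`) is free as a right `A`-module on the powers of `z`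
(resp. `z'`), with `a·z = z·σ(a)` (resp. `a·z' = z'·σ̂(a)`). -/
theorem stmt4 {F A R Rh : Type*} [Field F] [Ring A] [Algebra F A] [FiniteDimensional F A]
    [Ring R] [Ring Rh]
    (σ : A ≃ₐ[F] A) (θ : A → A)
    (hθlin : ∀ (c : F) (a : A), θ (c • a) = c • θ a)
    (hθadd : ∀ a c : A, θ (a + c) = θ a + θ c)
    (hθmul : ∀ a c : A, θ (a * c) = θ c * θ a)
    (hθone : θ 1 = 1) (hθinv : ∀ a, θ (θ a) = a)
    (ι : A →+* R) (z : R) (hz : ∀ a, ι a * z = z * ι (σ a))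
    (rep : (ℕ →₀ A) ≃+ R)
    (hrep : ∀ p, rep p = ∑ k ∈ p.support, z ^ k * ι (p k))
    (ι' : A →+* Rh) (z' : Rh)
    (hz' : ∀ a, ι' a * z' = z' * ι' (θ (σ.symm (θ a))))
    (rep' : (ℕ →₀ A) ≃+ Rh)
    (hrep' : ∀ p, rep' p = ∑ k ∈ p.support, z' ^ k * ι' (p k)) :
    ∃ Θ : R → Rh,
      (∀ r : R, Θ r = ∑ k ∈ (rep.symm r).support,
          z' ^ k * ι' (θ ((⇑σ.symm)^[k] ((rep.symm r) k)))) ∧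
      Function.Bijective Θ ∧
      (∀ a b : R, Θ (a + b) = Θ a + Θ b) ∧
      (∀ a b : R, Θ (a * b) = Θ b * Θ a) ∧
      Θ 1 = 1 ∧
      (∀ c : F, Θ (ι (algebraMap F A c)) = ι' (algebraMap F A c)) :=
  stmt4_general σ θ hθlin hθadd hθmul hθone hθinv ι z hz rep hrep ι' z' hz' rep' hrep'
end

section
/- In the setting of the previous statement, if additionally the coordinate map 𝔳 satisfies M_{σ̂} = (M_σ)ᵀ and M_{θ(a)} = (M_a)ᵀ for all a ∈ A, then M_{R̂}(Θ(f)) = (M_R(f))ᵀ for all f ∈ R = A[z;σ], where R̂ = A[z;σ̂]; that is, Θ is a transposition between the Hamming extensions (F[z], R, 𝔳) and (F[z], R̂, 𝔳). -/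
/-!
Write `σ̂ = θ ∘ σ⁻¹ ∘ θ` and let `M_λ` act on coordinate row vectors, so that `M_{λ ∘ μ} = M_μ M_λ`.
Since `ι a * z ^ k = z ^ k * ι (σ^k a)`, the `k`-th coefficient of row `i` of `M_R(f)`, for
`f = ∑ z^k ι(f_k)`, is the coordinate vector of `σ^k (b i) * f_k`, i.e. row `i` of `M_σ^k M_{f_k}`.
Likewise row `i` of `M_R̂(Θ f)` has `k`-th coefficient row `i` of
`M_σ̂^k M_{θ c} = (M_σᵀ)^k M_cᵀ = (M_c M_σ^k)ᵀ` with `c = σ^{-k} f_k`; and `M_c M_σ^k = M_σ^k M_{f_k}`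
because `σ^k (x * σ^{-k} f_k) = σ^k x * f_k`.
-/

open Matrix Polynomial

section SkewPolynomialPresentation

variable {A R : Type*} [Ring A] [Ring R] {ι : A →+* R} {z : R}

theorem mul_pow_eq_pow_mul_iterate {τ : A → A} (hz : ∀ a, ι a * z = z * ι (τ a))
    (a : A) (k : ℕ) : ι a * z ^ k = z ^ k * ι (τ^[k] a) := by
  induction k generalizing a with
  | zero => simp
  | succ k ih =>
    rw [pow_succ', ← mul_assoc, hz, mul_assoc, ih, ← mul_assoc, ← pow_succ',
      Function.iterate_succ_apply]

theorem mul_sum_pow_mul {τ : A → A} (hz : ∀ a, ι a * z = z * ι (τ a)) (a : A)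
    (s : Finset ℕ) (c : ℕ → A) :
    ι a * ∑ k ∈ s, z ^ k * ι (c k) = ∑ k ∈ s, z ^ k * ι (τ^[k] a * c k) := by
  simp only [Finset.mul_sum, map_mul, ← mul_assoc, mul_pow_eq_pow_mul_iterate hz]

variable {rep : (ℕ →₀ A) ≃+ R}

theorem rep_single (hrep : ∀ p, rep p = ∑ k ∈ p.support, z ^ k * ι (p k)) (k : ℕ) (a : A) :
    rep (Finsupp.single k a) = z ^ k * ι a := by
  rcases eq_or_ne a 0 with rfl | ha
  · simp
  · simp [hrep, Finsupp.support_single _ ha]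

theorem rep_symm_sum_pow_mul (hrep : ∀ p, rep p = ∑ k ∈ p.support, z ^ k * ι (p k))
    (s : Finset ℕ) (c : ℕ → A) :
    rep.symm (∑ k ∈ s, z ^ k * ι (c k)) = ∑ k ∈ s, Finsupp.single k (c k) := by
  rw [AddEquiv.symm_apply_eq, map_sum]
  simp only [rep_single hrep]

end SkewPolynomialPresentation

section Coordinates

variable {F A R : Type*} [Field F] [Ring A] [Algebra F A] [Ring R] {m : ℕ}
  {b : Module.Basis (Fin m) F A} {ι : A →+* R} {z : R} {rep : (ℕ →₀ A) ≃+ R}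
  {v : R → Fin m → F[X]}

theorem coord_sum_pow_mul (hrep : ∀ p, rep p = ∑ k ∈ p.support, z ^ k * ι (p k))
    (hv : ∀ r i, v r i = ∑ k ∈ (rep.symm r).support, monomial k (b.repr ((rep.symm r) k) i))
    (s : Finset ℕ) (c : ℕ → A) (i : Fin m) :
    v (∑ k ∈ s, z ^ k * ι (c k)) i = ∑ k ∈ s, monomial k (b.repr (c k) i) := by
  rw [hv, rep_symm_sum_pow_mul hrep]
  change Finsupp.sum _ (fun k a => monomial k (b.repr a i)) = _
  rw [← Finsupp.sum_finsetSum_index (by simp) (by simp)]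
  simp [Finsupp.sum_single_index]

theorem coord_ι_basis (hrep : ∀ p, rep p = ∑ k ∈ p.support, z ^ k * ι (p k))
    (hv : ∀ r i, v r i = ∑ k ∈ (rep.symm r).support, monomial k (b.repr ((rep.symm r) k) i))
    (i : Fin m) : v (ι (b i)) = Pi.single i 1 := by
  ext1 j
  have h0 := coord_sum_pow_mul hrep hv {0} (fun _ => b i) j
  simp only [Finset.sum_singleton, pow_zero, one_mul, b.repr_self] at h0
  simp [h0, Finsupp.single_apply, Pi.single_apply, eq_comm]

theorem matrix_apply_of_eq_sum {τ : A → A} (hz : ∀ a, ι a * z = z * ι (τ a))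
    (hrep : ∀ p, rep p = ∑ k ∈ p.support, z ^ k * ι (p k))
    (hv : ∀ r i, v r i = ∑ k ∈ (rep.symm r).support, monomial k (b.repr ((rep.symm r) k) i))
    {f : R} {M : Matrix (Fin m) (Fin m) F[X]} (hM : ∀ g : R, v (g * f) = vecMul (v g) M)
    {s : Finset ℕ} {c : ℕ → A} (hf : f = ∑ k ∈ s, z ^ k * ι (c k)) (i j : Fin m) :
    M i j = ∑ k ∈ s, monomial k (b.repr (τ^[k] (b i) * c k) j) := by
  have hrow : M i = v (ι (b i) * f) := by rw [hM, coord_ι_basis hrep hv, single_one_vecMul]; rfl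
  rw [hrow, hf, mul_sum_pow_mul hz, coord_sum_pow_mul hrep hv]

end Coordinates

section Transposition

variable {F A : Type*} [Field F] [Ring A] [Algebra F A] {m : ℕ} (b : Module.Basis (Fin m) F A)

theorem toMatrix_eq_transpose_iff (l l' : A →ₗ[F] A) :
    LinearMap.toMatrix b b l = (LinearMap.toMatrix b b l')ᵀ ↔
      (Matrix.of fun i j => b.repr (l (b i)) j) = (Matrix.of fun i j => b.repr (l' (b i)) j)ᵀ := by
  have h (l : A →ₗ[F] A) :
      (LinearMap.toMatrix b b l)ᵀ = Matrix.of fun i j => b.repr (l (b i)) j := by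
    ext
    simp [LinearMap.toMatrix_apply]
  rw [← h l, ← h l', transpose_inj]

theorem repr_iterate_mul_eq (σ : A ≃ₐ[F] A) (θ : A →ₗ[F] A)
    (hMσ : LinearMap.toMatrix b b (θ ∘ₗ σ.symm.toLinearMap ∘ₗ θ)
      = (LinearMap.toMatrix b b σ.toLinearMap)ᵀ)
    (hMθ : ∀ a, LinearMap.toMatrix b b (LinearMap.mulRight F (θ a))
      = (LinearMap.toMatrix b b (LinearMap.mulRight F a))ᵀ)
    (k : ℕ) (q : A) (i j : Fin m) :
    b.repr ((fun x => θ (σ.symm (θ x)))^[k] (b i) * θ ((⇑σ.symm)^[k] q)) j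
      = b.repr ((⇑σ)^[k] (b j) * q) i := by
  have hcomm : (σ.toLinearMap ^ k) ∘ₗ LinearMap.mulRight F ((⇑σ.symm)^[k] q)
      = LinearMap.mulRight F q ∘ₗ (σ.toLinearMap ^ k) := by
    ext x
    simp [Module.End.pow_apply, iterate_map_mul,
      Function.LeftInverse.iterate σ.apply_symm_apply k q]
  have key : LinearMap.toMatrix b b
        (LinearMap.mulRight F (θ ((⇑σ.symm)^[k] q)) ∘ₗ (θ ∘ₗ σ.symm.toLinearMap ∘ₗ θ) ^ k)
      = (LinearMap.toMatrix b b (LinearMap.mulRight F q ∘ₗ (σ.toLinearMap ^ k)))ᵀ := by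
    rw [LinearMap.toMatrix_comp b b b, ← LinearMap.toMatrix_pow, hMσ, hMθ, ← transpose_pow,
      ← transpose_mul, LinearMap.toMatrix_pow, ← LinearMap.toMatrix_comp b b b, hcomm]
  simpa [LinearMap.toMatrix_apply, Module.End.pow_apply, Function.comp_def] using
    congr_fun₂ key j i

end Transposition

theorem stmt5_general {F A R Rh : Type*} [Field F] [Ring A] [Algebra F A]
    [Ring R] [Ring Rh]
    {m : ℕ} (b : Module.Basis (Fin m) F A)
    (σ : A ≃ₐ[F] A) (θ : A → A)
    (hθlin : ∀ (c : F) (a : A), θ (c • a) = c • θ a)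
    (hθadd : ∀ a c : A, θ (a + c) = θ a + θ c)
    (ι : A →+* R) (z : R) (hz : ∀ a, ι a * z = z * ι (σ a))
    (rep : (ℕ →₀ A) ≃+ R)
    (hrep : ∀ p, rep p = ∑ k ∈ p.support, z ^ k * ι (p k))
    (ι' : A →+* Rh) (z' : Rh)
    (hz' : ∀ a, ι' a * z' = z' * ι' (θ (σ.symm (θ a))))
    (rep' : (ℕ →₀ A) ≃+ Rh)
    (hrep' : ∀ p, rep' p = ∑ k ∈ p.support, z' ^ k * ι' (p k))
    (v : R → Fin m → Polynomial F)
    (hv : ∀ r i, v r i = ∑ k ∈ (rep.symm r).support,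
      Polynomial.monomial k (b.repr ((rep.symm r) k) i))
    (v' : Rh → Fin m → Polynomial F)
    (hv' : ∀ r i, v' r i = ∑ k ∈ (rep'.symm r).support,
      Polynomial.monomial k (b.repr ((rep'.symm r) k) i))
    (hMσ : (Matrix.of fun i j => b.repr (θ (σ.symm (θ (b i)))) j)
        = (Matrix.of fun i j => b.repr (σ (b i)) j)ᵀ)
    (hMθ : ∀ a : A, (Matrix.of fun i j => b.repr (b i * θ a) j)
        = (Matrix.of fun i j => b.repr (b i * a) j)ᵀ)
    (Θ : R → Rh)
    (hΘ : ∀ r : R, Θ r = ∑ k ∈ (rep.symm r).support,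
      z' ^ k * ι' (θ ((⇑σ.symm)^[k] ((rep.symm r) k))))
    (f : R) (M M' : Matrix (Fin m) (Fin m) (Polynomial F))
    (hM : ∀ g : R, v (g * f) = Matrix.vecMul (v g) M)
    (hM' : ∀ g : Rh, v' (g * Θ f) = Matrix.vecMul (v' g) M') :
    M' = Mᵀ := by
  let θL : A →ₗ[F] A := IsLinearMap.mk' θ ⟨hθadd, hθlin⟩
  have hMσ' : LinearMap.toMatrix b b (θL ∘ₗ σ.symm.toLinearMap ∘ₗ θL)
      = (LinearMap.toMatrix b b σ.toLinearMap)ᵀ :=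
    (toMatrix_eq_transpose_iff b _ _).2 hMσ
  have hMθ' (a : A) : LinearMap.toMatrix b b (LinearMap.mulRight F (θL a))
      = (LinearMap.toMatrix b b (LinearMap.mulRight F a))ᵀ :=
    (toMatrix_eq_transpose_iff b _ _).2 (hMθ a)
  set p := rep.symm f
  have hf : f = ∑ k ∈ p.support, z ^ k * ι (p k) := by rw [← hrep, rep.apply_symm_apply]
  refine Matrix.ext fun i j => ?_
  rw [transpose_apply, matrix_apply_of_eq_sum hz' hrep' hv' hM' (hΘ f),
    matrix_apply_of_eq_sum hz hrep hv hM hf]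
  exact Finset.sum_congr rfl fun k _ =>
    congrArg (monomial k) (repr_iterate_mul_eq b σ θL hMσ' hMθ' k (p k) i j)

/-- In the setting of Statement 4, if the fixed basis additionally satisfies
`M_{σ̂} = (M_σ)ᵀ` and `M_{θ(a)} = (M_a)ᵀ` for all `a ∈ A`, then
`M_{R̂}(Θ(f)) = (M_R(f))ᵀ` for every `f ∈ R = A[z;σ]`, i.e. `Θ` is a transposition
between the Hamming extensions `(F[z], R, 𝔳)` and `(F[z], R̂, 𝔳)`. -/
theorem stmt5 {F A R Rh : Type*} [Field F] [Ring A] [Algebra F A]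
    [Ring R] [Ring Rh]
    {m : ℕ} (b : Module.Basis (Fin m) F A)
    (σ : A ≃ₐ[F] A) (θ : A → A)
    (hθlin : ∀ (c : F) (a : A), θ (c • a) = c • θ a)
    (hθadd : ∀ a c : A, θ (a + c) = θ a + θ c)
    (hθmul : ∀ a c : A, θ (a * c) = θ c * θ a)
    (hθone : θ 1 = 1) (hθinv : ∀ a, θ (θ a) = a)
    (ι : A →+* R) (z : R) (hz : ∀ a, ι a * z = z * ι (σ a))
    (rep : (ℕ →₀ A) ≃+ R)
    (hrep : ∀ p, rep p = ∑ k ∈ p.support, z ^ k * ι (p k))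
    (ι' : A →+* Rh) (z' : Rh)
    (hz' : ∀ a, ι' a * z' = z' * ι' (θ (σ.symm (θ a))))
    (rep' : (ℕ →₀ A) ≃+ Rh)
    (hrep' : ∀ p, rep' p = ∑ k ∈ p.support, z' ^ k * ι' (p k))
    (v : R → Fin m → Polynomial F)
    (hv : ∀ r i, v r i = ∑ k ∈ (rep.symm r).support,
      Polynomial.monomial k (b.repr ((rep.symm r) k) i))
    (v' : Rh → Fin m → Polynomial F)
    (hv' : ∀ r i, v' r i = ∑ k ∈ (rep'.symm r).support,
      Polynomial.monomial k (b.repr ((rep'.symm r) k) i))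
    (hMσ : (Matrix.of fun i j => b.repr (θ (σ.symm (θ (b i)))) j)
        = (Matrix.of fun i j => b.repr (σ (b i)) j)ᵀ)
    (hMθ : ∀ a : A, (Matrix.of fun i j => b.repr (b i * θ a) j)
        = (Matrix.of fun i j => b.repr (b i * a) j)ᵀ)
    (Θ : R → Rh)
    (hΘ : ∀ r : R, Θ r = ∑ k ∈ (rep.symm r).support,
      z' ^ k * ι' (θ ((⇑σ.symm)^[k] ((rep.symm r) k))))
    (f : R) (M M' : Matrix (Fin m) (Fin m) (Polynomial F))
    (hM : ∀ g : R, v (g * f) = Matrix.vecMul (v g) M)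
    (hM' : ∀ g : Rh, v' (g * Θ f) = Matrix.vecMul (v' g) M') :
    M' = Mᵀ :=
  stmt5_general b σ θ hθlin hθadd ι z hz rep hrep ι' z' hz' rep' hrep' v hv v' hv' hMσ hMθ Θ hΘ f M
    M' hM hM'
end

section
/- Let A = M_n(K) with K/F a finite field extension admitting a self-dual normal basis D, and let σ be any F-algebra automorphism of A. Writing σ = σ_U ∘ σ_{τ^h} (with σ_U inner and σ_{τ^h} entrywise Frobenius power) and setting σ̂ = θσ^{-1}θ for the transpose involution θ(a) = aᵀ, the matrices of σ and σ̂ as F-linear maps with respect to the induced basis satisfy M_{σ̂} = (M_σ)ᵀ. -/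
/-!
Because `D` is self-dual for the trace form of `K/F`, the basis `{α_k E_ij}` is orthonormal for
`⟨x, y⟩ = Tr_{K/F} (tr (x * yᵀ))`, so every coordinate is a value of this form. The form is
`σ`-invariant: `σ` preserves the centre `K` of `M_n(K)` and acts there by some `φ ∈ Aut(K/F)`;
undoing `φ` entrywise turns `σ` into a `K`-algebra automorphism, which preserves `tr`
(Skolem–Noether), so `tr ∘ σ = φ ∘ tr` and `Tr_{K/F}` cannot see `φ`. Hence
`(M_σ̂)_{p p'} = Tr tr (B_{p'} σ⁻¹(B_pᵀ)) = Tr tr (σ(B_{p'}) B_pᵀ) = (M_σ)_{p' p}`.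
-/

open Matrix

namespace Matrix

section Center

variable {F K ι : Type*} [CommSemiring F] [Field K] [Algebra F K] [Fintype ι] [DecidableEq ι]

theorem exists_scalar_eq_algEquiv_scalar (σ : Matrix ι ι K ≃ₐ[F] Matrix ι ι K) (c : K) :
    ∃ d, scalar ι d = σ (scalar ι c) := by
  have hc : scalar ι c ∈ Set.center (Matrix ι ι K) := by
    rw [center_eq_range]
    exact ⟨c, rfl⟩
  simpa using MulEquivClass.apply_mem_center σ hc

noncomputable def centerAlgEquivFun (σ : Matrix ι ι K ≃ₐ[F] Matrix ι ι K) (c : K) : K :=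
  (exists_scalar_eq_algEquiv_scalar σ c).choose

theorem scalar_centerAlgEquivFun (σ : Matrix ι ι K ≃ₐ[F] Matrix ι ι K) (c : K) :
    scalar ι (centerAlgEquivFun σ c) = σ (scalar ι c) :=
  (exists_scalar_eq_algEquiv_scalar σ c).choose_spec

variable [Nonempty ι]

theorem centerAlgEquivFun_eq_of_scalar_eq {σ : Matrix ι ι K ≃ₐ[F] Matrix ι ι K} {c d : K}
    (h : scalar ι d = σ (scalar ι c)) : centerAlgEquivFun σ c = d :=
  scalar_inj.mp ((scalar_centerAlgEquivFun σ c).trans h.symm)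

noncomputable def centerAlgEquiv (σ : Matrix ι ι K ≃ₐ[F] Matrix ι ι K) : K ≃ₐ[F] K where
  toFun := centerAlgEquivFun σ
  invFun := centerAlgEquivFun σ.symm
  left_inv c := centerAlgEquivFun_eq_of_scalar_eq <| by
    rw [scalar_centerAlgEquivFun, AlgEquiv.symm_apply_apply]
  right_inv c := centerAlgEquivFun_eq_of_scalar_eq <| by
    rw [scalar_centerAlgEquivFun, AlgEquiv.apply_symm_apply]
  map_mul' a b := centerAlgEquivFun_eq_of_scalar_eq <| by
    simp only [map_mul, scalar_centerAlgEquivFun]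
  map_add' a b := centerAlgEquivFun_eq_of_scalar_eq <| by
    simp only [map_add, scalar_centerAlgEquivFun]
  commutes' r := centerAlgEquivFun_eq_of_scalar_eq (σ.commutes r).symm

theorem scalar_centerAlgEquiv (σ : Matrix ι ι K ≃ₐ[F] Matrix ι ι K) (c : K) :
    scalar ι (centerAlgEquiv σ c) = σ (scalar ι c) :=
  scalar_centerAlgEquivFun σ c

theorem trace_algEquiv_apply (σ : Matrix ι ι K ≃ₐ[F] Matrix ι ι K) (x : Matrix ι ι K) :
    (σ x).trace = centerAlgEquiv σ x.trace := by
  set φ := centerAlgEquiv σ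
  set ρ := σ.trans φ.symm.mapMatrix
  have hρ : ∀ c : K, ρ (scalar ι c) = scalar ι c := fun c => by
    rw [AlgEquiv.trans_apply, ← scalar_centerAlgEquiv, AlgEquiv.mapMatrix_apply, scalar_apply,
      diagonal_map (map_zero _), AlgEquiv.symm_apply_apply, scalar_apply]
  let ρK : Matrix ι ι K ≃ₐ[K] Matrix ι ι K := { ρ with commutes' := hρ }
  have hσ : σ x = (ρK x).map φ := by
    simp [ρK, ρ, map_map, Function.comp_def]
  rw [hσ, ← AddMonoidHom.map_trace, trace_map]

end Center

theorem algebraTrace_trace_algEquiv_apply {F K ι : Type*} [CommRing F] [Field K] [Algebra F K]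
    [Fintype ι] [DecidableEq ι] (σ : Matrix ι ι K ≃ₐ[F] Matrix ι ι K) (x : Matrix ι ι K) :
    Algebra.trace F K (σ x).trace = Algebra.trace F K x.trace := by
  cases isEmpty_or_nonempty ι
  · simp [trace]
  · rw [trace_algEquiv_apply, Algebra.trace_eq_of_algEquiv]

theorem trace_single_mul_transpose_single {ι R : Type*} [Fintype ι] [DecidableEq ι]
    [CommSemiring R] (i j i' j' : ι) (a b : R) :
    (single i j a * (single i' j' b)ᵀ).trace = if i = i' ∧ j = j' then a * b else 0 := by
  simp only [trace_single_mul, transpose_apply, single_apply, smul_eq_mul, mul_ite, mul_zero]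
  congr 1
  grind

theorem repr_eq_algebraTrace_trace_mul_transpose {F K κ ι : Type*} [CommRing F] [CommRing K]
    [Algebra F K] [Fintype ι] [DecidableEq ι] [DecidableEq κ] {D : κ → K}
    (hD : ∀ k k', Algebra.trace F K (D k * D k') = if k = k' then 1 else 0)
    {B : Module.Basis (κ × ι × ι) F (Matrix ι ι K)} (hB : ∀ k i j, B (k, i, j) = single i j (D k))
    (x : Matrix ι ι K) (p : κ × ι × ι) :
    B.repr x p = Algebra.trace F K (x * (B p)ᵀ).trace := by
  have hcoord : B.coord p =
      Algebra.trace F K ∘ₗ traceLinearMap ι F K ∘ₗ LinearMap.mulRight F (B p)ᵀ := by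
    refine B.ext fun p' => ?_
    obtain ⟨k, i, j⟩ := p
    obtain ⟨k', i', j'⟩ := p'
    rw [B.coord_apply, B.repr_self, Finsupp.single_apply]
    simp only [LinearMap.comp_apply, hB, LinearMap.mulRight_apply, traceLinearMap_apply,
      trace_single_mul_transpose_single, apply_ite (Algebra.trace F K), hD, map_zero, Prod.ext_iff]
    grind
  exact LinearMap.congr_fun hcoord x

end Matrix

theorem stmt9_general {F K : Type*} [Field F] [Field K] [Algebra F K]
    {t n : ℕ} (D : Module.Basis (Fin t) F K)
    (hselfdual : ∀ i j : Fin t,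
      Algebra.trace F K (D i * D j) = if i = j then 1 else 0)
    (B : Module.Basis (Fin t × Fin n × Fin n) F (Matrix (Fin n) (Fin n) K))
    (hB : ∀ (k : Fin t) (i j : Fin n), B (k, i, j) = Matrix.single i j (D k))
    (σ : Matrix (Fin n) (Fin n) K ≃ₐ[F] Matrix (Fin n) (Fin n) K) :
    ∀ p p' : Fin t × Fin n × Fin n,
      B.repr ((σ.symm ((B p)ᵀ))ᵀ) p' = B.repr (σ (B p')) p := by
  intro p p'
  rw [repr_eq_algebraTrace_trace_mul_transpose hselfdual hB,
    repr_eq_algebraTrace_trace_mul_transpose hselfdual hB, ← transpose_mul, trace_transpose,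
    ← algebraTrace_trace_algEquiv_apply σ, map_mul, AlgEquiv.apply_symm_apply]

/-- Let `A = M_n(K)` where `K/F` is a finite field extension with a
self-dual normal basis `D`, and let `σ` be any `F`-algebra automorphism of `A`.
With `θ(a) = aᵀ` and `σ̂ = θ∘σ⁻¹∘θ`, the matrices of `σ` and `σ̂` as `F`-linear maps
with respect to the induced basis `{α_k E_ij}` satisfy `M_{σ̂} = (M_σ)ᵀ`
(stated entrywise: `(M_{σ̂})_{p p'} = (M_σ)_{p' p}`). -/
theorem stmt9 {F K : Type*} [Field F] [Fintype F] [Field K] [Fintype K] [Algebra F K]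
    {t n : ℕ} (ht : 0 < t) (q : ℕ) (hq : q = Fintype.card F)
    (hcard : Fintype.card K = q ^ t)
    (α : K) (D : Module.Basis (Fin t) F K)
    (hnormal : ∀ k : Fin t, D k = α ^ q ^ (k : ℕ))
    (hselfdual : ∀ i j : Fin t,
      Algebra.trace F K (D i * D j) = if i = j then 1 else 0)
    (B : Module.Basis (Fin t × Fin n × Fin n) F (Matrix (Fin n) (Fin n) K))
    (hB : ∀ (k : Fin t) (i j : Fin n), B (k, i, j) = Matrix.single i j (D k))
    (σ : Matrix (Fin n) (Fin n) K ≃ₐ[F] Matrix (Fin n) (Fin n) K) :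
    ∀ p p' : Fin t × Fin n × Fin n,
      B.repr ((σ.symm ((B p)ᵀ))ᵀ) p' = B.repr (σ (B p')) p :=
  stmt9_general D hselfdual B hB σ
end

section
/- Let C be a commutative ring, σ an automorphism with σ^n = id, u a unit fixed by σ, ℛ = C[x;σ]/⟨x^n − u⟩ and ℛ̂ = C[x;σ]/⟨x^n − u^{-1}⟩. Then the map Θ : ℛ → ℛ̂ defined by Θ(Σ_{i=0}^{n−1} a_i x^i) = Σ_{i=0}^{n−1} σ^{−i}(a_i) x^{−i} is a ring anti-isomorphism. -/
/-!
In `ℛ̂` the element `y = u x^{n-1}` is a two-sided inverse of `x` with `y a = σ⁻¹(a) y`, and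
`Θ` is the additive map sending `a x^k` to `σ^{-k}(a) y^k` for `k < n`. Since `x^n = u` in `ℛ`
and `y^n = u` in `ℛ̂` with `u` central and `σ`-fixed, this formula for `Θ (a x^k)` stays valid
for every `k`. On monomials, anti-multiplicativity then reduces to the identity
`σ^{-(i+j)}(a σ^i(b)) = σ^{-j}(b) σ^{-(i+j)}(a)` in the commutative ring `C`. For bijectivity,
`y^i` is a unit multiple of `x^{-i}` (`y^i = u x^{n-i}` for `0 < i < n`), so in coordinates `Θ`
permutes the indices by `i ↦ -i` and applies a bijection to each coefficient.
-/

open Function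

section SkewMonomial

variable {C A : Type*} [Semiring C] [Semiring A] {ι : C →+* A} {x : A}

theorem pow_mul_map_eq_map_iterate_mul_pow {f : C → C} (hx : ∀ a, x * ι a = ι (f a) * x)
    (k : ℕ) (a : C) : x ^ k * ι a = ι (f^[k] a) * x ^ k := by
  induction k generalizing a with
  | zero => simp
  | succ k ih =>
    rw [pow_succ, mul_assoc, hx, ← mul_assoc, ih, iterate_succ_apply, mul_assoc, ← pow_succ]

theorem map_mul_pow_mul_map_mul_pow {f : C → C} (hx : ∀ a, x * ι a = ι (f a) * x)
    (a b : C) (i j : ℕ) : ι a * x ^ i * (ι b * x ^ j) = ι (a * f^[i] b) * x ^ (i + j) := by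
  rw [mul_assoc, ← mul_assoc (x ^ i), pow_mul_map_eq_map_iterate_mul_pow hx, mul_assoc, ← pow_add,
    ← mul_assoc, ← map_mul]

theorem map_mul_pow_add {f : C → C} {v : C} (hx : ∀ a, x * ι a = ι (f a) * x)
    (hv : f v = v) {n : ℕ} (hxn : x ^ n = ι v) (a : C) (k : ℕ) :
    ι a * x ^ (k + n) = ι (a * v) * x ^ k := by
  rw [pow_add, hxn, pow_mul_map_eq_map_iterate_mul_pow hx, iterate_fixed hv, ← mul_assoc, ← map_mul]

theorem mul_map_eq_map_symm_mul {σ : C ≃+* C} {y : A} (hx : ∀ a, x * ι a = ι (σ a) * x)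
    (hxy : x * y = 1) (hyx : y * x = 1) (a : C) : y * ι a = ι (σ.symm a) * y := by
  calc y * ι a = y * (ι (σ (σ.symm a)) * x) * y := by
        rw [σ.apply_symm_apply, mul_assoc, mul_assoc, hxy, mul_one]
    _ = ι (σ.symm a) * y := by rw [← hx, ← mul_assoc, hyx, one_mul]

variable {u : Cˣ} {n : ℕ}

theorem map_mul_pow_pred_mul_eq_one (hn : 0 < n) (hxn : x ^ n = ι ↑u⁻¹) :
    ι ↑u * x ^ (n - 1) * x = 1 := by
  rw [mul_assoc, ← pow_succ, Nat.sub_add_cancel hn, hxn, ← map_mul, Units.mul_inv, map_one]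

theorem mul_map_mul_pow_pred_eq_one {f : C → C} (hx : ∀ a, x * ι a = ι (f a) * x)
    (hu : f u = u) (hn : 0 < n) (hxn : x ^ n = ι ↑u⁻¹) : x * (ι ↑u * x ^ (n - 1)) = 1 := by
  rw [← mul_assoc, hx, hu, mul_assoc, ← pow_succ', Nat.sub_add_cancel hn, hxn, ← map_mul,
    Units.mul_inv, map_one]

theorem pow_eq_map_mul_pow_sub {y : A} (hxy : x * y = 1) (hxn : x ^ n = ι ↑u⁻¹) {i : ℕ}
    (hi : i ≤ n) : y ^ i = ι ↑u * x ^ (n - i) := by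
  calc y ^ i = ι ↑u * (x ^ n * y ^ i) := by
        rw [hxn, ← mul_assoc, ← map_mul, Units.mul_inv, map_one, one_mul]
    _ = ι ↑u * x ^ (n - i) := by
        rw [← Nat.sub_add_cancel hi, pow_add, mul_assoc, pow_mul_pow_eq_one i hxy, mul_one,
          Nat.sub_add_cancel hi]

theorem exists_pow_val_eq_map_unit_mul_pow_neg [NeZero n] {y : A} (hxy : x * y = 1)
    (hxn : x ^ n = ι ↑u⁻¹) (i : Fin n) :
    ∃ w : Cˣ, y ^ (i : ℕ) = ι ↑w * x ^ ((-i : Fin n) : ℕ) := by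
  rcases eq_or_ne i 0 with rfl | hi
  · exact ⟨1, by simp⟩
  · have hi' : (i : ℕ) ≠ 0 := Fin.val_ne_zero_iff.mpr hi
    refine ⟨u, ?_⟩
    rw [pow_eq_map_mul_pow_sub hxy hxn i.isLt.le, Fin.val_neg', Nat.mod_eq_of_lt (by omega)]

end SkewMonomial

section SkewInvSubst

variable {C R A : Type*} [CommSemiring C] [Semiring R] [Semiring A] {n : ℕ}

theorem RingEquiv.iterate_symm_apply_eq_self {σ : C ≃+* C} (hσn : ∀ a, σ^[n] a = a) (a : C) :
    σ.symm^[n] a = a := by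
  conv_lhs => rw [← hσn a]
  exact LeftInverse.iterate σ.symm_apply_apply n a

theorem map_iterate_symm_mul_pow_mul {σ : C ≃+* C} {ι : C →+* A} {y : A}
    (hy : ∀ a, y * ι a = ι (σ.symm a) * y) (a b : C) (i j : ℕ) :
    ι (σ.symm^[j] b) * y ^ j * (ι (σ.symm^[i] a) * y ^ i) =
      ι (σ.symm^[i + j] (a * σ^[i] b)) * y ^ (i + j) := by
  have hb : σ.symm^[i + j] (σ^[i] b) = σ.symm^[j] b := by
    rw [add_comm, iterate_add_apply, LeftInverse.iterate σ.symm_apply_apply i b]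
  rw [map_mul_pow_mul_map_mul_pow hy, ← iterate_add_apply, iterate_map_mul, hb, mul_comm,
    add_comm j i]

/-- The map `Θ` of the paper, `Σ aᵢ xⁱ ↦ Σ σ^{-i}(aᵢ) yⁱ`, read off the coordinates `rep`;
`y` stands for `x⁻¹`. -/
def skewInvSubst (σ : C ≃+* C) (rep : (Fin n → C) ≃+ R) (ι : C →+* A) (y : A) : R →+ A where
  toFun r := ∑ i : Fin n, ι (σ.symm^[i] (rep.symm r i)) * y ^ (i : ℕ)
  map_zero' := by simp
  map_add' r s := by simp [add_mul, Finset.sum_add_distrib]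

variable {σ : C ≃+* C} {rep : (Fin n → C) ≃+ R} {ι : C →+* R} {x : R} {ι' : C →+* A} {y : A}

theorem skewInvSubst_apply (r : R) : skewInvSubst σ rep ι' y r =
    ∑ i : Fin n, ι' (σ.symm^[i] (rep.symm r i)) * y ^ (i : ℕ) := rfl

theorem symm_map_mul_pow_eq_single (hrep : ∀ c, rep c = ∑ i : Fin n, ι (c i) * x ^ (i : ℕ))
    (a : C) (i : Fin n) : rep.symm (ι a * x ^ (i : ℕ)) = Pi.single i a := by
  rw [AddEquiv.symm_apply_eq, hrep, Fintype.sum_eq_single i fun j hj => by simp [hj],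
    Pi.single_eq_same]

theorem skewInvSubst_map_mul_pow_of_lt (hrep : ∀ c, rep c = ∑ i : Fin n, ι (c i) * x ^ (i : ℕ))
    (a : C) {k : ℕ} (hk : k < n) :
    skewInvSubst σ rep ι' y (ι a * x ^ k) = ι' (σ.symm^[k] a) * y ^ k := by
  rw [skewInvSubst_apply, symm_map_mul_pow_eq_single hrep a ⟨k, hk⟩,
    Fintype.sum_eq_single ⟨k, hk⟩ fun j hj => by simp [hj], Pi.single_eq_same]

theorem skewInvSubst_map_mul_pow (hrep : ∀ c, rep c = ∑ i : Fin n, ι (c i) * x ^ (i : ℕ))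
    (hn : 0 < n) (hσn : ∀ a, σ^[n] a = a) {u : C} (hu : σ u = u)
    (hx : ∀ a, x * ι a = ι (σ a) * x) (hxn : x ^ n = ι u)
    (hy : ∀ a, y * ι' a = ι' (σ.symm a) * y) (hyn : y ^ n = ι' u) (a : C) (k : ℕ) :
    skewInvSubst σ rep ι' y (ι a * x ^ k) = ι' (σ.symm^[k] a) * y ^ k := by
  induction k using Nat.strong_induction_on generalizing a with
  | _ k ih =>
  rcases lt_or_ge k n with hk | hk
  · exact skewInvSubst_map_mul_pow_of_lt hrep a hk
  obtain ⟨k, rfl⟩ := Nat.exists_eq_add_of_le' hk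
  have hu' : σ.symm u = u := σ.symm_apply_eq.mpr hu.symm
  rw [map_mul_pow_add hx hu hxn, ih k (by omega), iterate_add_apply,
    σ.iterate_symm_apply_eq_self hσn, pow_add, hyn, pow_mul_map_eq_map_iterate_mul_pow hy,
    iterate_fixed hu', iterate_map_mul, map_mul, iterate_fixed hu', mul_assoc]

theorem skewInvSubst_mul (hrep : ∀ c, rep c = ∑ i : Fin n, ι (c i) * x ^ (i : ℕ))
    (hn : 0 < n) (hσn : ∀ a, σ^[n] a = a) {u : C} (hu : σ u = u)
    (hx : ∀ a, x * ι a = ι (σ a) * x) (hxn : x ^ n = ι u)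
    (hy : ∀ a, y * ι' a = ι' (σ.symm a) * y) (hyn : y ^ n = ι' u) (r s : R) :
    skewInvSubst σ rep ι' y (r * s) = skewInvSubst σ rep ι' y s * skewInvSubst σ rep ι' y r := by
  obtain ⟨c, rfl⟩ := rep.surjective r
  obtain ⟨d, rfl⟩ := rep.surjective s
  simp only [hrep, Finset.sum_mul_sum, map_sum]
  rw [Finset.sum_comm]
  refine Finset.sum_congr rfl fun i _ => Finset.sum_congr rfl fun j _ => ?_
  simp only [map_mul_pow_mul_map_mul_pow hx,
    skewInvSubst_map_mul_pow hrep hn hσn hu hx hxn hy hyn, map_iterate_symm_mul_pow_mul hy]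

theorem skewInvSubst_one (hrep : ∀ c, rep c = ∑ i : Fin n, ι (c i) * x ^ (i : ℕ))
    (hn : 0 < n) : skewInvSubst σ rep ι' y 1 = 1 := by
  simpa using skewInvSubst_map_mul_pow_of_lt (ι' := ι') (σ := σ) (y := y) hrep 1 hn

theorem skewInvSubst_bijective [NeZero n] {x' : A} {rep' : (Fin n → C) ≃+ A}
    (hrep' : ∀ c, rep' c = ∑ i : Fin n, ι' (c i) * x' ^ (i : ℕ))
    (hy : ∀ i : Fin n, ∃ w : Cˣ, y ^ (i : ℕ) = ι' ↑w * x' ^ ((-i : Fin n) : ℕ)) :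
    Bijective (skewInvSubst σ rep ι' y) := by
  choose w hw using hy
  let g : ∀ i : Fin n, C → C := fun i a => σ.symm^[i] a * w i
  have hg : ∀ i, Bijective (g i) := fun i =>
    (Units.mulRight_bijective (w i)).comp (σ.symm.bijective.iterate i)
  have hneg : Involutive fun d : Fin n → C => d ∘ Neg.neg := fun d => funext fun j => by simp
  have hΘ : ⇑(skewInvSubst σ rep ι' y) = rep' ∘ (fun d => d ∘ Neg.neg) ∘ Pi.map g ∘ rep.symm := by
    funext r
    rw [skewInvSubst_apply, comp_apply, hrep', ← Equiv.sum_comp (Equiv.neg (Fin n))]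
    refine Fintype.sum_congr _ _ fun i => ?_
    simp [g, hw, ← mul_assoc]
  rw [hΘ]
  exact rep'.bijective.comp (hneg.bijective.comp ((Bijective.piMap hg).comp rep.symm.bijective))

end SkewInvSubst

/-- With `C` commutative, `σ` an automorphism with `σ^n = id`, `u` a unit
fixed by `σ`, `ℛ = C[x;σ]/⟨x^n − u⟩` and `ℛ̂ = C[x;σ]/⟨x^n − u⁻¹⟩` (both presented
abstractly as free left `C`-modules on `1, x, …, x^{n-1}` with the skew relations), the
map `Θ(Σ a_i x^i) = Σ σ^{-i}(a_i) x^{-i}` (where `x^{-1} = u·x^{n-1}` in `ℛ̂`) is a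
ring anti-isomorphism. -/
theorem stmt11 {C R Rh : Type*} [CommRing C] [Ring R] [Ring Rh]
    (σ : C ≃+* C) (n : ℕ) (hn : 0 < n) (hσn : ∀ a : C, (⇑σ)^[n] a = a)
    (u : Cˣ) (huσ : σ (u : C) = u)
    (ι : C →+* R) (x : R) (hx : ∀ a : C, x * ι a = ι (σ a) * x)
    (hxn : x ^ n = ι u)
    (rep : (Fin n → C) ≃+ R)
    (hrep : ∀ c : Fin n → C, rep c = ∑ i : Fin n, ι (c i) * x ^ (i : ℕ))
    (ι' : C →+* Rh) (x' : Rh) (hx' : ∀ a : C, x' * ι' a = ι' (σ a) * x')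
    (hxn' : x' ^ n = ι' ((u⁻¹ : Cˣ) : C))
    (rep' : (Fin n → C) ≃+ Rh)
    (hrep' : ∀ c : Fin n → C, rep' c = ∑ i : Fin n, ι' (c i) * x' ^ (i : ℕ)) :
    ∀ Θ : R → Rh,
      (∀ r : R, Θ r = ∑ i : Fin n,
        ι' ((⇑σ.symm)^[(i : ℕ)] (rep.symm r i)) * (ι' (u : C) * x' ^ (n - 1)) ^ (i : ℕ)) →
      Function.Bijective Θ ∧
      (∀ a b : R, Θ (a + b) = Θ a + Θ b) ∧
      (∀ a b : R, Θ (a * b) = Θ b * Θ a) ∧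
      Θ 1 = 1 := by
  intro Θ hΘ
  have : NeZero n := ⟨hn.ne'⟩
  set y := ι' u * x' ^ (n - 1)
  have hxy : x' * y = 1 := mul_map_mul_pow_pred_eq_one hx' huσ hn hxn'
  have hy := mul_map_eq_map_symm_mul hx' hxy (map_mul_pow_pred_mul_eq_one hn hxn')
  have hyn : y ^ n = ι' u := by simpa using pow_eq_map_mul_pow_sub hxy hxn' le_rfl
  obtain rfl : Θ = skewInvSubst σ rep ι' y := funext hΘ
  exact ⟨skewInvSubst_bijective hrep' (exists_pow_val_eq_map_unit_mul_pow_neg hxy hxn'),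
    map_add _, skewInvSubst_mul hrep hn hσn huσ hx hxn hy hyn,
    skewInvSubst_one hrep hn⟩
end

section
/- With ℛ = C[x;σ]/⟨x^n − u⟩, ℛ̂ = C[x;σ]/⟨x^n − u^{-1}⟩ and coordinate maps 𝔳, 𝔳̂ given by the basis {1, x, …, x^{n−1}}, the anti-isomorphism Θ(Σ a_i x^i) = Σ σ^{−i}(a_i) x^{−i} satisfies M_{ℛ̂}(Θ(f)) = (M_ℛ(f))ᵀ for every f ∈ ℛ. In particular, for f = Σ_{i=0}^{n−1} a_i x^i, the matrix M_ℛ(f) has (k, j)-entry σ^k(a_{j−k}) when j ≥ k and u·σ^k(a_{n+j−k}) when j < k. -/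
/-!
Left multiplication by `x ^ k` moves the coefficient `a_i` to position `i + k`, twisted to
`σ^k(a_i)`, and wrapping past `x ^ n` contributes the factor `u`; this is row `k` of `M`.
In `ℛ̂` the element `u x^{n-1}` is the inverse of `x`, so `(u x^{n-1})^i = u x^{n-i}`, and
`σ^{-i} = σ^{n-i}`; hence `Θ f` has coordinates `b_j = σ^j(a_{-j})`, times `u` for `j ≠ 0`.
Feeding `b` into the same row formula with `u⁻¹` and using `σ^n = id` gives `M j k`.
-/

open Matrix Function

/-- Row `k` holds the coordinates of `x ^ k * ∑ a_i x^i` in `C[x;σ]/⟨x^n - c⟩`. -/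
def skewConstacyclicMatrix {C : Type*} [CommRing C] {n : ℕ} (σ : C ≃+* C) (c : C)
    (a : Fin n → C) : Matrix (Fin n) (Fin n) C :=
  of fun k j => if (k : ℕ) ≤ j then σ^[k] (a (j - k)) else c * σ^[k] (a (j - k))

/-- Coordinates of `Θ (∑ a_i x^i)`; `-j` is negation in `Fin n`, i.e. `n - j` for `j ≠ 0`. -/
def thetaCoeffs {C : Type*} [CommRing C] {n : ℕ} [NeZero n] (σ : C ≃+* C) (u : C)
    (a : Fin n → C) : Fin n → C :=
  fun j => (if j = 0 then 1 else u) * σ^[j] (a (-j))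

namespace SkewConstacyclic

variable {C : Type*} [CommRing C] (σ : C ≃+* C) {n : ℕ}

lemma iterate_fin_add (hσn : ∀ a : C, σ^[n] a = a) (i j : Fin n) (a : C) :
    σ^[(i + j : Fin n)] a = σ^[i] (σ^[j] a) := by
  rw [Fin.val_add, IsPeriodicPt.iterate_mod_apply (hσn a), iterate_add_apply]

lemma symm_iterate_eq_iterate_neg [NeZero n] (hσn : ∀ a : C, σ^[n] a = a) (i : Fin n)
    (a : C) : σ.symm^[i] a = σ^[(-i : Fin n)] a :=
  calc σ.symm^[i] a = σ.symm^[i] (σ^[i] (σ^[(-i : Fin n)] a)) := by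
        rw [← iterate_fin_add σ hσn, add_neg_cancel, Fin.val_zero, iterate_zero_apply]
    _ = σ^[(-i : Fin n)] a := (LeftInverse.iterate σ.symm_apply_apply i) _

lemma skewConstacyclicMatrix_thetaCoeffs [NeZero n] (hσn : ∀ a : C, σ^[n] a = a) (u : Cˣ)
    (huσ : σ u = u) (a : Fin n → C) :
    skewConstacyclicMatrix σ ↑u⁻¹ (thetaCoeffs σ u a) = (skewConstacyclicMatrix σ u a)ᵀ := by
  ext k j
  simp only [skewConstacyclicMatrix, thetaCoeffs, transpose_apply, of_apply]
  have off_diag (hkj : k ≠ j) :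
      σ^[k] ((if j - k = 0 then 1 else ↑u) * σ^[(j - k : Fin n)] (a (-(j - k)))) =
        u * σ^[j] (a (k - j)) := by
    rw [if_neg (sub_ne_zero.mpr hkj.symm), iterate_map_mul, iterate_fixed huσ, neg_sub,
      ← iterate_fin_add σ hσn, add_sub_cancel]
  rcases lt_trichotomy k j with hkj | rfl | hjk
  · rw [if_pos (Fin.le_iff_val_le_val.mp hkj.le), if_neg (not_le.mpr (Fin.lt_def.mp hkj)),
      off_diag hkj.ne]
  · simp
  · rw [if_neg (not_le.mpr (Fin.lt_def.mp hjk)), if_pos (Fin.le_iff_val_le_val.mp hjk.le),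
      off_diag hjk.ne', Units.inv_mul_cancel_left]

section SkewPolynomialQuotient

variable {R : Type*} [Ring R] (ι : C →+* R) (x : R)

lemma pow_mul_map (hx : ∀ a : C, x * ι a = ι (σ a) * x) (k : ℕ) (a : C) :
    x ^ k * ι a = ι (σ^[k] a) * x ^ k := by
  induction k generalizing a with
  | zero => simp
  | succ k ih =>
    rw [pow_succ, mul_assoc, hx, ← mul_assoc, ih, ← iterate_succ_apply, mul_assoc, ← pow_succ]

lemma pow_val_add_val {c : C} (hxn : x ^ n = ι c) (i k : Fin n) :
    x ^ ((k : ℕ) + i) =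
      ι (if (k : ℕ) ≤ (i + k : Fin n) then 1 else c) * x ^ ((i + k : Fin n) : ℕ) := by
  have hi := i.isLt
  rw [Fin.val_add_eq_ite]
  by_cases hwrap : n ≤ (i : ℕ) + k
  · rw [if_pos hwrap, if_neg (by omega), ← hxn, ← pow_add]
    congr 1
    omega
  · rw [if_neg hwrap, if_pos (by omega), map_one, one_mul, add_comm]

lemma coords_pow (rep : (Fin n → C) ≃+ R)
    (hrep : ∀ c : Fin n → C, rep c = ∑ i : Fin n, ι (c i) * x ^ (i : ℕ)) (k : Fin n) :
    rep.symm (x ^ (k : ℕ)) = Pi.single k 1 := by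
  rw [rep.symm_apply_eq, hrep, Finset.sum_eq_single k (fun i _ hi => by simp [hi]) (by simp)]
  simp

lemma pow_mul_rep [NeZero n] (hx : ∀ a : C, x * ι a = ι (σ a) * x) {c : C}
    (hxn : x ^ n = ι c) (rep : (Fin n → C) ≃+ R)
    (hrep : ∀ c : Fin n → C, rep c = ∑ i : Fin n, ι (c i) * x ^ (i : ℕ)) (k : Fin n)
    (a : Fin n → C) : x ^ (k : ℕ) * rep a = rep (skewConstacyclicMatrix σ c a k) := by
  rw [hrep, hrep, Finset.mul_sum]
  refine Fintype.sum_equiv (Equiv.addRight k) _ _ fun i => ?_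
  rw [← mul_assoc, pow_mul_map σ ι x hx, mul_assoc, ← pow_add, pow_val_add_val ι x hxn,
    ← mul_assoc, ← map_mul]
  simp only [skewConstacyclicMatrix, of_apply, Equiv.coe_addRight, add_sub_cancel_right]
  split_ifs <;> simp [mul_comm]

lemma rightMulMatrix_eq [NeZero n] (hx : ∀ a : C, x * ι a = ι (σ a) * x) {c : C}
    (hxn : x ^ n = ι c) (rep : (Fin n → C) ≃+ R)
    (hrep : ∀ c : Fin n → C, rep c = ∑ i : Fin n, ι (c i) * x ^ (i : ℕ))
    (f : R) (M : Matrix (Fin n) (Fin n) C)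
    (hM : ∀ g : R, rep.symm (g * f) = vecMul (rep.symm g) M) :
    M = skewConstacyclicMatrix σ c (rep.symm f) := by
  ext k j
  have hrow := hM (x ^ (k : ℕ))
  rw [coords_pow ι x rep hrep, single_one_vecMul, ← rep.apply_symm_apply f,
    pow_mul_rep σ ι x hx hxn rep hrep, rep.symm_apply_apply] at hrow
  exact (congrFun hrow j).symm

lemma mul_unit_mul_pow_pred_eq_one [NeZero n] (u : Cˣ) (huσ : σ u = u)
    (hx : ∀ a : C, x * ι a = ι (σ a) * x) (hxn : x ^ n = ι ↑u⁻¹) :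
    x * (ι u * x ^ (n - 1)) = 1 := by
  rw [← mul_assoc, hx, huσ, mul_assoc, ← pow_succ', Nat.sub_add_cancel NeZero.one_le, hxn,
    ← map_mul, Units.mul_inv, map_one]

lemma unit_mul_pow_pred_pow_eq [NeZero n] (u : Cˣ) (huσ : σ u = u)
    (hx : ∀ a : C, x * ι a = ι (σ a) * x) (hxn : x ^ n = ι ↑u⁻¹) {i : ℕ} (hi : i ≤ n) :
    (ι u * x ^ (n - 1)) ^ i = ι u * x ^ (n - i) :=
  calc (ι u * x ^ (n - 1)) ^ i = ι u * (ι ↑u⁻¹ * (ι u * x ^ (n - 1)) ^ i) := by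
        rw [← mul_assoc, ← map_mul, Units.mul_inv, map_one, one_mul]
    _ = ι u * (x ^ (n - i) * (x ^ i * (ι u * x ^ (n - 1)) ^ i)) := by
        rw [← mul_assoc (x ^ (n - i)), ← pow_add, Nat.sub_add_cancel hi, hxn]
    _ = ι u * x ^ (n - i) := by
        rw [pow_mul_pow_eq_one i (mul_unit_mul_pow_pred_eq_one σ ι x u huσ hx hxn), mul_one]

lemma coords_sum_eq_thetaCoeffs [NeZero n] (hσn : ∀ a : C, σ^[n] a = a) (u : Cˣ)
    (huσ : σ u = u) (hx : ∀ a : C, x * ι a = ι (σ a) * x) (hxn : x ^ n = ι ↑u⁻¹)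
    (rep : (Fin n → C) ≃+ R)
    (hrep : ∀ c : Fin n → C, rep c = ∑ i : Fin n, ι (c i) * x ^ (i : ℕ)) (a : Fin n → C) :
    rep.symm (∑ i : Fin n, ι (σ.symm^[i] (a i)) * (ι u * x ^ (n - 1)) ^ (i : ℕ)) =
      thetaCoeffs σ u a := by
  rw [rep.symm_apply_eq, hrep]
  refine Fintype.sum_equiv (Equiv.neg (Fin n)) _ _ fun i => ?_
  simp only [thetaCoeffs, Equiv.neg_apply, neg_neg, neg_eq_zero]
  rw [unit_mul_pow_pred_pow_eq σ ι x u huσ hx hxn i.isLt.le, symm_iterate_eq_iterate_neg σ hσn]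
  by_cases hi : i = 0
  · subst hi
    simp [hxn, ← map_mul]
  · have hi' : 0 < (i : ℕ) := Nat.pos_of_ne_zero (Fin.val_ne_iff.mpr hi)
    rw [if_neg hi, Fin.val_neg', Nat.mod_eq_of_lt (by omega), ← mul_assoc, ← map_mul,
      mul_comm (σ^[_] _)]

end SkewPolynomialQuotient

end SkewConstacyclic

/-- With `ℛ = C[x;σ]/⟨x^n − u⟩`, `ℛ̂ = C[x;σ]/⟨x^n − u⁻¹⟩` and coordinate
maps given by the basis `1, x, …, x^{n-1}`, the anti-isomorphism
`Θ(Σ a_i x^i) = Σ σ^{-i}(a_i)x^{-i}` satisfies `M_{ℛ̂}(Θ f) = (M_ℛ f)ᵀ` for every `f`;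
and the matrix `M_ℛ(f)` of `f = Σ a_i x^i` has `(k,j)` entry `σ^k(a_{j-k})` if `j ≥ k`
and `u·σ^k(a_{n+j-k})` if `j < k` (here `j - k` is subtraction in `Fin n`,
i.e. modulo `n`). -/
theorem stmt12 {C R Rh : Type*} [CommRing C] [Ring R] [Ring Rh]
    (σ : C ≃+* C) (n : ℕ) (hn : 0 < n) (hσn : ∀ a : C, (⇑σ)^[n] a = a)
    (u : Cˣ) (huσ : σ (u : C) = u)
    (ι : C →+* R) (x : R) (hx : ∀ a : C, x * ι a = ι (σ a) * x)
    (hxn : x ^ n = ι u)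
    (rep : (Fin n → C) ≃+ R)
    (hrep : ∀ c : Fin n → C, rep c = ∑ i : Fin n, ι (c i) * x ^ (i : ℕ))
    (ι' : C →+* Rh) (x' : Rh) (hx' : ∀ a : C, x' * ι' a = ι' (σ a) * x')
    (hxn' : x' ^ n = ι' ((u⁻¹ : Cˣ) : C))
    (rep' : (Fin n → C) ≃+ Rh)
    (hrep' : ∀ c : Fin n → C, rep' c = ∑ i : Fin n, ι' (c i) * x' ^ (i : ℕ))
    (Θ : R → Rh)
    (hΘ : ∀ r : R, Θ r = ∑ i : Fin n,
      ι' ((⇑σ.symm)^[(i : ℕ)] (rep.symm r i)) * (ι' (u : C) * x' ^ (n - 1)) ^ (i : ℕ))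
    (f : R) (M Mh : Matrix (Fin n) (Fin n) C)
    (hM : ∀ g : R, rep.symm (g * f) = Matrix.vecMul (rep.symm g) M)
    (hMh : ∀ g : Rh, rep'.symm (g * Θ f) = Matrix.vecMul (rep'.symm g) Mh) :
    Mh = Mᵀ ∧
    ∀ k j : Fin n, M k j =
      if (k : ℕ) ≤ (j : ℕ) then (⇑σ)^[(k : ℕ)] (rep.symm f (j - k))
      else (u : C) * (⇑σ)^[(k : ℕ)] (rep.symm f (j - k)) := by
  have : NeZero n := ⟨hn.ne'⟩
  have hM' := SkewConstacyclic.rightMulMatrix_eq σ ι x hx hxn rep hrep f M hM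
  have hMh' := SkewConstacyclic.rightMulMatrix_eq σ ι' x' hx' hxn' rep' hrep' (Θ f) Mh hMh
  rw [hΘ, SkewConstacyclic.coords_sum_eq_thetaCoeffs σ ι' x' hσn u huσ hx' hxn' rep' hrep']
    at hMh'
  refine ⟨?_, fun k j => by rw [hM']; rfl⟩
  rw [hMh', hM', SkewConstacyclic.skewConstacyclicMatrix_thetaCoeffs σ hσn u huσ]
end

section
/- Let C be a commutative ring, σ an automorphism with σ^n = id, u a unit fixed by σ, and suppose x^n − u = f·h in C[x;σ] with f monic. If 𝒞 = 𝔳(ℛf) is the (u,σ)-constacyclic code generated by f, then 𝒞^⊥ = 𝔳̂(ℛ̂·Θ(h)); in particular the dual of a (u,σ)-constacyclic code of this form is (u^{-1},σ)-constacyclic. -/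
/-!
The dot product is a constant coefficient: `w ⬝ᵥ 𝔳(r)` is the coefficient of `1` in `r · θ(w)`,
where `θ(w) = ∑ σ⁻ⁱ(wᵢ) x⁻ⁱ`, and this pairing is nondegenerate (the coefficient of `1` in
`x⁻ʲ s` is `σ⁻ʲ(sⱼ)`). Hence `w ∈ 𝒞^⊥` iff `π f · θ(w) = 0`.
Since `xⁿ − u = f h` with `f` monic, the right annihilator of `π f` is `π h · ℛ`: lift an
annihilated element to `C[x;σ]`, divide `f` times it by `xⁿ − u` (central, as `σⁿ = id` and
`σ u = u`), and cancel the monic `f`.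
Finally, `Θ` and `θ ∘ 𝔳̂⁻¹` both send `a xᵐ` to `σ⁻ᵐ(a) x⁻ᵐ` for every `m ∈ ℤ`, so they are mutually
inverse anti-isomorphisms, and `θ(w) ∈ π h · ℛ` iff `𝔳̂⁻¹(w) ∈ ℛ̂ · Θ(π h)`.
-/

namespace SkewConstacyclic

variable {C A : Type*} [CommRing C] [Ring A]

theorem iterate_symm_eq_zpow (σ : RingAut C) (k : ℕ) :
    (⇑σ.symm)^[k] = ⇑(σ ^ (-(k : ℤ))) := by
  rw [_root_.zpow_neg, zpow_natCast, ← inv_pow, RingAut.coe_pow]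
  rfl

theorem zpow_apply_units_zpow {σ : RingAut C} {v : Cˣ} (hv : σ v = v) (k q : ℤ) :
    (σ ^ k) ↑(v ^ q) = (↑(v ^ q) : C) := by
  have hk : σ ^ k ∈ MulAction.stabilizer (RingAut C) (v : C) :=
    Subgroup.zpow_mem _ hv k
  have hmap : Units.map (σ ^ k).toMonoidHom v = v := Units.ext hk
  calc (σ ^ k) ↑(v ^ q) = ↑(Units.map (σ ^ k).toMonoidHom (v ^ q)) := rfl
    _ = ↑(v ^ q) := by rw [map_zpow, hmap]

theorem apply_units_inv {σ : RingAut C} {v : Cˣ} (hv : σ v = v) : σ ↑v⁻¹ = (↑v⁻¹ : C) := by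
  simpa using zpow_apply_units_zpow hv 1 (-1)

section SkewCommute

variable (σ : RingAut C) (ι : C →+* A)

theorem pow_mul_ι {x : A} (hx : ∀ a, x * ι a = ι (σ a) * x) (k : ℕ) (a : C) :
    x ^ k * ι a = ι ((σ ^ k) a) * x ^ k := by
  induction k generalizing a with
  | zero => simp
  | succ k ih =>
    rw [pow_succ, mul_assoc, hx, ← mul_assoc, ih, mul_assoc, pow_succ, RingAut.mul_apply]

theorem monomial_mul_monomial {x : A} (hx : ∀ a, x * ι a = ι (σ a) * x) (a b : C) (j k : ℕ) :
    ι a * x ^ j * (ι b * x ^ k) = ι (a * (σ ^ j) b) * x ^ (j + k) := by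
  rw [mul_assoc, ← mul_assoc (x ^ j), pow_mul_ι σ ι hx, map_mul, pow_add]
  noncomm_ring

theorem units_zpow_mul_ι {X : Aˣ} (hX : ∀ a, (X : A) * ι a = ι (σ a) * X) (m : ℤ) (a : C) :
    (↑(X ^ m) : A) * ι a = ι ((σ ^ m) a) * ↑(X ^ m) := by
  induction m using Int.induction_on generalizing a with
  | zero => simp
  | succ m ih =>
    rw [_root_.zpow_add_one, _root_.zpow_add_one, Units.val_mul, mul_assoc, hX, ← mul_assoc, ih,
      mul_assoc, RingAut.mul_apply]
  | pred m ih =>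
    have hinv : (↑X⁻¹ : A) * ι a = ι (σ⁻¹ a) * ↑X⁻¹ := by
      rw [Units.inv_mul_eq_iff_eq_mul, ← mul_assoc, hX, RingAut.inv_apply,
        RingEquiv.apply_symm_apply, mul_assoc, Units.mul_inv, mul_one]
    rw [_root_.zpow_sub_one, _root_.zpow_sub_one, Units.val_mul, mul_assoc, hinv, ← mul_assoc, ih,
      mul_assoc, RingAut.mul_apply]

end SkewCommute

theorem toNat_emod_lt (m : ℤ) {n : ℕ} (hn : 0 < n) : (m % n).toNat < n := by
  have := Int.emod_lt_of_pos m (Int.natCast_pos.mpr hn)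
  omega

theorem toNat_emod_add_mul_ediv (m : ℤ) {n : ℕ} (hn : 0 < n) :
    ((m % n).toNat : ℤ) + n * (m / n) = m := by
  rw [Int.toNat_of_nonneg (Int.emod_nonneg m (by exact_mod_cast hn.ne')), Int.emod_add_mul_ediv]

/-- `A` is the paper's `C[x;σ]/⟨xⁿ - v⟩`, and `rep` its coordinate map `𝔳`. -/
structure IsSkewConstacyclic (σ : RingAut C) (n : ℕ) (v : Cˣ) (ι : C →+* A) (x : A)
    (rep : (Fin n → C) ≃+ A) : Prop where
  pos : 0 < n
  pow_eq_one : σ ^ n = 1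
  apply_unit : σ v = v
  mul_ι : ∀ a, x * ι a = ι (σ a) * x
  pow_eq : x ^ n = ι v
  rep_apply : ∀ c, rep c = ∑ i : Fin n, ι (c i) * x ^ (i : ℕ)

namespace IsSkewConstacyclic

variable {σ : RingAut C} {n : ℕ} {v : Cˣ} {ι : C →+* A} {x : A} {rep : (Fin n → C) ≃+ A}
  (P : IsSkewConstacyclic σ n v ι x rep)
include P

theorem rep_symm_monomial {k : ℕ} (hk : k < n) (a : C) :
    rep.symm (ι a * x ^ k) = Pi.single ⟨k, hk⟩ a := by
  rw [AddEquiv.symm_apply_eq, P.rep_apply, Finset.sum_eq_single ⟨k, hk⟩]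
  · rw [Pi.single_eq_same]
  · intro i _ hi
    rw [Pi.single_eq_of_ne hi, map_zero, zero_mul]
  · simp

theorem eq_sum (r : A) : r = ∑ i : Fin n, ι (rep.symm r i) * x ^ (i : ℕ) := by
  rw [← P.rep_apply, AddEquiv.apply_symm_apply]

theorem isUnit : IsUnit x :=
  (isUnit_pow_iff P.pos.ne').mp (P.pow_eq ▸ v.isUnit.map ι)

noncomputable def unit : Aˣ := P.isUnit.unit

@[simp]
theorem val_unit : (P.unit : A) = x := P.isUnit.unit_spec

theorem unit_zpow_mul_ι (m : ℤ) (a : C) :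
    (↑(P.unit ^ m) : A) * ι a = ι ((σ ^ m) a) * ↑(P.unit ^ m) :=
  units_zpow_mul_ι σ ι (by simpa using P.mul_ι) m a

theorem val_unit_zpow_natCast (k : ℕ) : (↑(P.unit ^ (k : ℤ)) : A) = x ^ k := by
  simp

theorem val_unit_zpow_add_mul (m q : ℤ) :
    (↑(P.unit ^ (m + n * q)) : A) = ι ↑(v ^ q) * ↑(P.unit ^ m) := by
  have hn : P.unit ^ n = Units.map (ι : C →* A) v := Units.ext (by simp [P.pow_eq])
  rw [_root_.zpow_add, _root_.zpow_mul, zpow_natCast, hn, ← map_zpow, Units.val_mul,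
    Units.coe_map]
  simpa only [MonoidHom.coe_coe, zpow_apply_units_zpow P.apply_unit] using
    P.unit_zpow_mul_ι m ↑(v ^ q)

theorem rep_symm_monomial_zpow (a : C) (m : ℤ) :
    rep.symm (ι a * ↑(P.unit ^ m)) =
      Pi.single ⟨(m % n).toNat, toNat_emod_lt m P.pos⟩ (a * ↑(v ^ (m / n))) := by
  conv_lhs => rw [← toNat_emod_add_mul_ediv m P.pos, P.val_unit_zpow_add_mul, ← mul_assoc,
    ← map_mul, P.val_unit_zpow_natCast]
  exact P.rep_symm_monomial _ _

theorem rep_symm_monomial_zpow_sub_apply_zero (a : C) (i j : Fin n) :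
    rep.symm (ι a * ↑(P.unit ^ ((j : ℤ) - i))) ⟨0, P.pos⟩ = if j = i then a else 0 := by
  rw [P.rep_symm_monomial_zpow, Pi.single_apply]
  by_cases hji : j = i
  · simp [hji]
  · have hdvd : ¬ (n : ℤ) ∣ (j : ℤ) - i := fun hdvd =>
      hji (Fin.ext (by have := Int.eq_zero_of_abs_lt_dvd hdvd (by rw [abs_lt]; omega); omega))
    have hmod : ((j : ℤ) - i) % n ≠ 0 := mt Int.dvd_of_emod_eq_zero hdvd
    have := Int.emod_nonneg ((j : ℤ) - i) (by exact_mod_cast P.pos.ne' : (n : ℤ) ≠ 0)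
    simp only [hji, if_false, Fin.ext_iff]
    rw [if_neg (by omega)]

theorem eq_sum_zpow (r : A) : r = ∑ i : Fin n, ι (rep.symm r i) * ↑(P.unit ^ (i : ℤ)) := by
  simpa only [P.val_unit_zpow_natCast] using P.eq_sum r

/-- Composed with the coordinate map of the ring with constant `v⁻¹`, this is the paper's
anti-isomorphism `Θ` (see `theta_eq_sum_iterate`, where `x⁻¹ = v⁻¹ xⁿ⁻¹`). -/
noncomputable def theta : (Fin n → C) →+ A where
  toFun c := ∑ i : Fin n, ι ((σ ^ (-(i : ℤ))) (c i)) * ↑(P.unit ^ (-(i : ℤ)))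
  map_zero' := by simp
  map_add' c d := by simp [add_mul, Finset.sum_add_distrib]

theorem theta_apply (c : Fin n → C) :
    P.theta c = ∑ i : Fin n, ι ((σ ^ (-(i : ℤ))) (c i)) * ↑(P.unit ^ (-(i : ℤ))) := rfl

theorem theta_single (i : Fin n) (a : C) :
    P.theta (Pi.single i a) = ι ((σ ^ (-(i : ℤ))) a) * ↑(P.unit ^ (-(i : ℤ))) := by
  rw [theta_apply, Finset.sum_eq_single i]
  · rw [Pi.single_eq_same]
  · intro j _ hj
    rw [Pi.single_eq_of_ne hj, map_zero, map_zero, zero_mul]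
  · simp

theorem surjective_of_apply {S : Type*} [Ring S] (π : S →+* A) {ιS : C →+* S} {xS : S}
    (hπι : ∀ a, π (ιS a) = ι a) (hπx : π xS = x) : Function.Surjective π := fun t =>
  ⟨∑ i : Fin n, ιS (rep.symm t i) * xS ^ (i : ℕ), by simp [hπι, hπx, ← P.eq_sum]⟩

theorem val_unit_inv : (↑P.unit⁻¹ : A) = ι ↑v⁻¹ * x ^ (n - 1) := by
  refine Units.inv_eq_of_mul_eq_one_left ?_
  rw [val_unit, mul_assoc, ← pow_succ, Nat.sub_add_cancel P.pos, P.pow_eq, ← map_mul,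
    Units.inv_mul, map_one]

theorem theta_eq_sum_iterate (c : Fin n → C) :
    P.theta c = ∑ i : Fin n, ι ((⇑σ.symm)^[i] (c i)) * (ι ↑v⁻¹ * x ^ (n - 1)) ^ (i : ℕ) := by
  simp only [theta_apply, iterate_symm_eq_zpow, ← P.val_unit_inv, _root_.zpow_neg, zpow_natCast,
    ← inv_pow, Units.val_pow_eq_pow_val]

variable {B : Type*} [Ring B] {w : Cˣ} {ιB : C →+* B} {y : B} {repB : (Fin n → C) ≃+ B}

theorem theta_rep_symm_monomial (Q : IsSkewConstacyclic σ n w ιB y repB) (hw : w = v⁻¹)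
    (a : C) (m : ℤ) :
    P.theta (repB.symm (ιB a * ↑(Q.unit ^ m))) = ι ((σ ^ (-m)) a) * ↑(P.unit ^ (-m)) := by
  subst hw
  rw [Q.rep_symm_monomial_zpow, theta_single, Fin.val_mk]
  set k : ℤ := ((m % n).toNat : ℤ)
  have hm : -m = -k + n * -(m / n) := by
    linarith [toNat_emod_add_mul_ediv m P.pos]
  have hσ : σ ^ (-m) = σ ^ (-k) := by
    rw [hm, _root_.zpow_add, _root_.zpow_mul, zpow_natCast, P.pow_eq_one, _root_.one_zpow,
      mul_one]
  rw [hm, P.val_unit_zpow_add_mul, ← hm, hσ, ← mul_assoc, ← map_mul, map_mul,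
    _root_.inv_zpow', zpow_apply_units_zpow P.apply_unit]

theorem monomial_mul_monomial_zpow (a b : C) (m m' : ℤ) :
    ι a * ↑(P.unit ^ m) * (ι b * ↑(P.unit ^ m')) = ι (a * (σ ^ m) b) * ↑(P.unit ^ (m + m')) := by
  rw [mul_assoc, ← mul_assoc (↑(P.unit ^ m) : A), P.unit_zpow_mul_ι, _root_.zpow_add,
    Units.val_mul, map_mul]
  noncomm_ring

theorem theta_rep_symm_mul (Q : IsSkewConstacyclic σ n w ιB y repB) (hw : w = v⁻¹) (r s : B) :
    P.theta (repB.symm (r * s)) = P.theta (repB.symm s) * P.theta (repB.symm r) := by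
  have hmono : ∀ (a b : C) (m m' : ℤ),
      P.theta (repB.symm (ιB a * ↑(Q.unit ^ m) * (ιB b * ↑(Q.unit ^ m')))) =
        P.theta (repB.symm (ιB b * ↑(Q.unit ^ m'))) *
          P.theta (repB.symm (ιB a * ↑(Q.unit ^ m))) := by
    intro a b m m'
    rw [Q.monomial_mul_monomial_zpow, P.theta_rep_symm_monomial Q hw,
      P.theta_rep_symm_monomial Q hw, P.theta_rep_symm_monomial Q hw,
      P.monomial_mul_monomial_zpow, neg_add_rev]
    congr 2
    rw [map_mul, _root_.zpow_add, RingAut.mul_apply, RingAut.mul_apply,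
      ← RingAut.mul_apply (σ ^ (-m)), ← _root_.zpow_add, neg_add_cancel, zpow_zero,
      RingAut.one_apply, mul_comm]
  rw [Q.eq_sum_zpow r, Q.eq_sum_zpow s]
  simp only [Finset.sum_mul_sum, map_sum, hmono]
  exact Finset.sum_comm

theorem theta_rep_symm_theta (Q : IsSkewConstacyclic σ n w ιB y repB) (hw : w = v⁻¹) (r : B) :
    Q.theta (rep.symm (P.theta (repB.symm r))) = r := by
  have hv : v = w⁻¹ := by rw [hw, inv_inv]
  conv_rhs => rw [Q.eq_sum_zpow r]
  conv_lhs => rw [Q.eq_sum_zpow r]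
  simp only [map_sum, P.theta_rep_symm_monomial Q hw, Q.theta_rep_symm_monomial P hv, neg_neg,
    ← RingAut.mul_apply, ← _root_.zpow_add, add_neg_cancel, zpow_zero, RingAut.one_apply]

theorem dotProduct_rep_symm (c : Fin n → C) (r : A) :
    c ⬝ᵥ rep.symm r = rep.symm (r * P.theta c) ⟨0, P.pos⟩ := by
  conv_rhs => rw [P.eq_sum_zpow r]
  simp only [theta_apply, Finset.sum_mul_sum, P.monomial_mul_monomial_zpow, map_sum,
    Finset.sum_apply, ← sub_eq_add_neg, P.rep_symm_monomial_zpow_sub_apply_zero, Finset.sum_ite_eq,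
    Finset.mem_univ, if_true, ← RingAut.mul_apply, ← _root_.zpow_add, sub_self,
    zpow_zero, RingAut.one_apply]
  simp only [dotProduct, mul_comm]

theorem rep_symm_unit_zpow_neg_mul (i : Fin n) (s : A) :
    rep.symm (↑(P.unit ^ (-(i : ℤ))) * s) ⟨0, P.pos⟩ = (σ ^ (-(i : ℤ))) (rep.symm s i) := by
  conv_lhs => rw [P.eq_sum_zpow s, ← one_mul (↑(P.unit ^ (-(i : ℤ))) : A), ← map_one ι]
  simp only [Finset.mul_sum, P.monomial_mul_monomial_zpow, map_sum, Finset.sum_apply,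
    neg_add_eq_sub, P.rep_symm_monomial_zpow_sub_apply_zero, Finset.sum_ite_eq',
    Finset.mem_univ, if_true, one_mul]

theorem eq_zero_of_forall_rep_symm_mul_zero {s : A}
    (hs : ∀ g : A, rep.symm (g * s) ⟨0, P.pos⟩ = 0) : s = 0 := by
  have hcoord : rep.symm s = 0 := by
    ext i
    have := hs ↑(P.unit ^ (-(i : ℤ)))
    rwa [P.rep_symm_unit_zpow_neg_mul, map_eq_zero_iff _ (σ ^ (-(i : ℤ))).injective] at this
  simpa using congrArg rep hcoord

theorem forall_dotProduct_eq_zero_iff (c : Fin n → C) (t : A) :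
    (∀ g : A, c ⬝ᵥ rep.symm (g * t) = 0) ↔ t * P.theta c = 0 := by
  simp only [P.dotProduct_rep_symm, mul_assoc]
  refine ⟨P.eq_zero_of_forall_rep_symm_mul_zero, fun h g => ?_⟩
  rw [h, mul_zero, map_zero, Pi.zero_apply]

end IsSkewConstacyclic

structure IsSkewPolynomialRing {S : Type*} [Ring S] (σ : RingAut C) (ι : C →+* S) (x : S)
    (rep : (ℕ →₀ C) ≃+ S) : Prop where
  mul_ι : ∀ a, x * ι a = ι (σ a) * x
  rep_apply : ∀ p, rep p = ∑ k ∈ p.support, ι (p k) * x ^ k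

namespace IsSkewPolynomialRing

variable {S : Type*} [Ring S] {σ : RingAut C} {ι : C →+* S} {x : S} {rep : (ℕ →₀ C) ≃+ S}
  (Q : IsSkewPolynomialRing σ ι x rep)
include Q

theorem rep_symm_monomial (k : ℕ) (a : C) : rep.symm (ι a * x ^ k) = Finsupp.single k a := by
  rw [AddEquiv.symm_apply_eq, Q.rep_apply]
  by_cases ha : a = 0
  · simp [ha]
  · rw [Finsupp.support_single _ ha, Finset.sum_singleton, Finsupp.single_eq_same]

theorem eq_sum_range (s : S) {N : ℕ} (hN : ∀ k, N < k → rep.symm s k = 0) :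
    s = ∑ k ∈ Finset.range (N + 1), ι (rep.symm s k) * x ^ k := by
  conv_lhs => rw [← rep.apply_symm_apply s, Q.rep_apply]
  refine Finset.sum_subset (fun k hk => ?_) (fun k _ hk => ?_)
  · by_contra hkN
    exact Finsupp.mem_support_iff.mp hk (hN k (by simpa [Nat.lt_succ_iff] using hkN))
  · rw [Finsupp.notMem_support_iff.mp hk, map_zero, zero_mul]

theorem rep_symm_mul_apply_add (f s : S) {d e : ℕ} (hf : ∀ k, d < k → rep.symm f k = 0)
    (hs : ∀ k, e < k → rep.symm s k = 0) :
    rep.symm (f * s) (d + e) = rep.symm f d * (σ ^ d) (rep.symm s e) := by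
  conv_lhs => rw [Q.eq_sum_range f hf, Q.eq_sum_range s hs]
  simp only [Finset.sum_mul_sum, monomial_mul_monomial σ ι Q.mul_ι, map_sum, Q.rep_symm_monomial,
    Finsupp.finsetSum_apply, Finsupp.single_apply]
  rw [Finset.sum_eq_single d, Finset.sum_eq_single e]
  · simp
  · intro b hb hbe
    rw [if_neg]
    simp only [Finset.mem_range] at hb
    omega
  · simp
  · intro a ha had
    refine Finset.sum_eq_zero fun b hb => ?_
    rw [if_neg]
    simp only [Finset.mem_range] at ha hb
    omega
  · simp

theorem eq_zero_of_monic_mul_eq_zero {f s : S}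
    (hf : ∃ d, rep.symm f d = 1 ∧ ∀ k, d < k → rep.symm f k = 0) (h : f * s = 0) : s = 0 := by
  obtain ⟨d, hd, hf⟩ := hf
  by_contra hs
  have hne : (rep.symm s).support.Nonempty := by
    rw [Finsupp.support_nonempty_iff, Ne, AddEquiv.map_eq_zero_iff]
    exact hs
  set e := (rep.symm s).support.max' hne
  have hs' : ∀ k, e < k → rep.symm s k = 0 := fun k hk =>
    Finsupp.notMem_support_iff.mp fun hk' => (Finset.le_max' _ _ hk').not_gt hk
  have htop := Q.rep_symm_mul_apply_add f s hf hs'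
  rw [h, hd, one_mul, map_zero, Finsupp.coe_zero, Pi.zero_apply, eq_comm,
    map_eq_zero_iff _ (σ ^ d).injective] at htop
  exact Finsupp.mem_support_iff.mp (Finset.max'_mem _ hne) htop

theorem exists_eq_mul_add {n : ℕ} (hn : 0 < n) (hσ : σ ^ n = 1) (u : C) (s : S) :
    ∃ (q : S) (c : ℕ → C),
      s = (x ^ n - ι u) * q + ∑ k ∈ Finset.range n, ι (c k) * x ^ k := by
  have hmono : ∀ k a, ∃ (q : S) (c : ℕ → C),
      ι a * x ^ k = (x ^ n - ι u) * q + ∑ k ∈ Finset.range n, ι (c k) * x ^ k := by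
    intro k
    induction k using Nat.strong_induction_on with
    | _ k ih =>
      intro a
      by_cases hk : k < n
      · refine ⟨0, Pi.single k a, ?_⟩
        simp [Pi.single_apply, apply_ite ι, ite_mul, hk]
      · obtain ⟨q, c, hqc⟩ := ih (k - n) (by omega) (u * a)
        have hreduce :
            ι a * x ^ k = (x ^ n - ι u) * (ι a * x ^ (k - n)) + ι (u * a) * x ^ (k - n) := by
          rw [sub_mul, ← mul_assoc, pow_mul_ι σ ι Q.mul_ι, hσ, RingAut.one_apply, mul_assoc,
            ← pow_add, Nat.add_sub_cancel' (not_lt.mp hk), map_mul]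
          noncomm_ring
        exact ⟨ι a * x ^ (k - n) + q, c, by rw [hreduce, hqc, mul_add, add_assoc]⟩
  rw [← rep.apply_symm_apply s, Q.rep_apply]
  refine Finset.sum_induction _
    (fun s => ∃ (q : S) (c : ℕ → C),
      s = (x ^ n - ι u) * q + ∑ k ∈ Finset.range n, ι (c k) * x ^ k)
    ?_ ⟨0, 0, by simp⟩ (fun k _ => hmono k _)
  rintro _ _ ⟨q, c, rfl⟩ ⟨q', c', rfl⟩
  refine ⟨q + q', c + c', ?_⟩
  simp only [mul_add, Pi.add_apply, map_add, add_mul, Finset.sum_add_distrib]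
  abel

section Quotient

variable {R : Type*} [Ring R] {n : ℕ} {v : Cˣ} {ιR : C →+* R} {xR : R}
  {repR : (Fin n → C) ≃+ R} (P : IsSkewConstacyclic σ n v ιR xR repR) (π : S →+* R)
  (hπι : ∀ a, π (ι a) = ιR a) (hπx : π x = xR)
include P hπι hπx

theorem exists_eq_mul_of_map_eq_zero {s : S} (hs : π s = 0) : ∃ q, s = (x ^ n - ι v) * q := by
  obtain ⟨q, c, rfl⟩ := Q.exists_eq_mul_add P.pos P.pow_eq_one v s
  have hc : repR (fun i : Fin n => c i) = 0 := by
    simpa [hπι, hπx, P.pow_eq, P.rep_apply,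
      Fin.sum_univ_eq_sum_range (fun k => ιR (c k) * xR ^ k)] using hs
  have hc' : ∀ k ∈ Finset.range n, c k = 0 := fun k hk =>
    congrFun ((AddEquiv.map_eq_zero_iff repR).mp hc) ⟨k, Finset.mem_range.mp hk⟩
  exact ⟨q, by rw [Finset.sum_eq_zero fun k hk => by rw [hc' k hk, map_zero, zero_mul], add_zero]⟩

theorem map_mul_eq_zero_iff {f h : S}
    (hf : ∃ d, rep.symm f d = 1 ∧ ∀ k, d < k → rep.symm f k = 0)
    (hfh : x ^ n - ι v = f * h) (t : R) : π f * t = 0 ↔ ∃ r, t = π h * r := by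
  constructor
  · intro ht
    obtain ⟨t, rfl⟩ := P.surjective_of_apply π hπι hπx t
    obtain ⟨q, hq⟩ :=
      Q.exists_eq_mul_of_map_eq_zero P π hπι hπx (s := f * t) (by rw [map_mul, ht])
    have hdiff : f * (t - h * q) = 0 := by rw [mul_sub, hq, hfh, mul_assoc, sub_self]
    rw [sub_eq_zero.mp (Q.eq_zero_of_monic_mul_eq_zero hf hdiff)]
    exact ⟨π q, map_mul π h q⟩
  · rintro ⟨r, rfl⟩
    rw [← mul_assoc, ← map_mul, ← hfh, map_sub, map_pow, hπx, hπι, P.pow_eq, sub_self, zero_mul]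

end Quotient

end IsSkewPolynomialRing

end SkewConstacyclic

open SkewConstacyclic in
/-- Let `C` be commutative, `σ` an automorphism with `σ^n = id`, `u` a
unit fixed by `σ`, and suppose `x^n − u = f·h` in `S = C[x;σ]` with `f` monic. Let
`ℛ = C[x;σ]/⟨x^n − u⟩` and `ℛ̂ = C[x;σ]/⟨x^n − u⁻¹⟩` (presented abstractly, with
projection `π : S → ℛ`), coordinate maps `𝔳, 𝔳̂` given by the basis `1,…,x^{n-1}`, and
`Θ : ℛ → ℛ̂` the anti-isomorphism. If `𝒞 = 𝔳(ℛ·π(f))` is the `(u,σ)`-constacyclic code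
generated by `f`, then `𝒞^⊥ = 𝔳̂(ℛ̂·Θ(π h))`; in particular `𝒞^⊥` is
`(u⁻¹,σ)`-constacyclic. -/
theorem stmt14 {C S R Rh : Type*} [CommRing C] [Ring S] [Ring R] [Ring Rh]
    (σ : C ≃+* C) (n : ℕ) (hn : 0 < n) (hσn : ∀ a : C, (⇑σ)^[n] a = a)
    (u : Cˣ) (huσ : σ (u : C) = u)
    (ιS : C →+* S) (xS : S) (hxS : ∀ a : C, xS * ιS a = ιS (σ a) * xS)
    (repS : (ℕ →₀ C) ≃+ S)
    (hrepS : ∀ p : ℕ →₀ C, repS p = ∑ k ∈ p.support, ιS (p k) * xS ^ k)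
    (ι : C →+* R) (x : R) (hx : ∀ a : C, x * ι a = ι (σ a) * x)
    (hxn : x ^ n = ι u)
    (rep : (Fin n → C) ≃+ R)
    (hrep : ∀ c : Fin n → C, rep c = ∑ i : Fin n, ι (c i) * x ^ (i : ℕ))
    (π : S →+* R) (hπι : ∀ a : C, π (ιS a) = ι a) (hπx : π xS = x)
    (ι' : C →+* Rh) (x' : Rh) (hx' : ∀ a : C, x' * ι' a = ι' (σ a) * x')
    (hxn' : x' ^ n = ι' ((u⁻¹ : Cˣ) : C))
    (rep' : (Fin n → C) ≃+ Rh)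
    (hrep' : ∀ c : Fin n → C, rep' c = ∑ i : Fin n, ι' (c i) * x' ^ (i : ℕ))
    (Θ : R → Rh)
    (hΘ : ∀ r : R, Θ r = ∑ i : Fin n,
      ι' ((⇑σ.symm)^[(i : ℕ)] (rep.symm r i)) * (ι' (u : C) * x' ^ (n - 1)) ^ (i : ℕ))
    (f h : S)
    (hmonic : ∃ d : ℕ, repS.symm f d = 1 ∧ ∀ k, d < k → repS.symm f k = 0)
    (hfh : xS ^ n - ιS u = f * h) :
    {w : Fin n → C | ∀ g : R, dotProduct w (rep.symm (g * π f)) = 0}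
      = Set.range fun g : Rh => rep'.symm (g * Θ (π h)) := by
  have hσ : σ ^ n = 1 := RingEquiv.ext fun a => by rw [RingAut.coe_pow, hσn]; rfl
  have P : IsSkewConstacyclic σ n u ι x rep := ⟨hn, hσ, huσ, hx, hxn, hrep⟩
  have P' : IsSkewConstacyclic σ n u⁻¹ ι' x' rep' :=
    ⟨hn, hσ, apply_units_inv huσ, hx', hxn', hrep'⟩
  have Q : IsSkewPolynomialRing σ ιS xS repS := ⟨hxS, hrepS⟩
  have hΘP : ∀ r, Θ r = P'.theta (rep.symm r) := fun r => by
    rw [hΘ, P'.theta_eq_sum_iterate, inv_inv]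
  have hu : u = u⁻¹⁻¹ := (inv_inv u).symm
  ext w
  simp only [Set.mem_ofPred_eq, Set.mem_range, P.forall_dotProduct_eq_zero_iff,
    Q.map_mul_eq_zero_iff P π hπι hπx hmonic hfh]
  constructor
  · rintro ⟨r, hr⟩
    refine ⟨Θ r, ?_⟩
    have hw : P'.theta (rep.symm (P.theta w)) = rep' w := by
      simpa using P.theta_rep_symm_theta P' rfl (rep' w)
    rw [hΘP, hΘP, ← P'.theta_rep_symm_mul P hu, ← hr, hw, AddEquiv.symm_apply_apply]
  · rintro ⟨g, rfl⟩
    refine ⟨P.theta (rep'.symm g), ?_⟩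
    rw [hΘP, P.theta_rep_symm_mul P' rfl, P'.theta_rep_symm_theta P hu]
end

section
/- Let L be a field with automorphism σ of finite order n, K = L^σ, and let {α, σ(α), …, σ^{n−1}(α)} be a normal basis of L/K. Setting β = σ(α)α^{-1}, suppose γ ∈ L satisfies (x−γ)·lclm(x−σ(β),…,x−σ^{n−1}(β)) = x^n − 1 in L[x;σ]. Then for all 0 ≤ k ≤ n−1, lcrm(x−γ, x−σ(γ), …, x−σ^k(γ)) · lclm(x−σ^{k+1}(β), …, x−σ^{n−1}(β)) = x^n − 1. -/
/-!
Every `f ∈ L[x;σ]` acts on `L` as the `K`-linear operator `v ↦ ∑ fⱼ σʲ(v)`, multiplicatively,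
and `x - σ(d)/d` right divides `f` exactly when this operator kills `d`; peeling off such
factors one at a time shows that a nonzero operator of `f` has a kernel of `K`-dimension at
most `deg f`.

Let `B` be the lclm of the `x - σ^i(β)`, `1 ≤ i ≤ n - 1`. It arises from `g` by adjoining `k`
linear factors, so `n - 1 = deg B ≤ deg g + k`. Write `x^n - 1 = u g`. Twisting the
coefficients of `(x - γ) B = x^n - 1` by `σ^i` gives `(x - σ^i(γ)) σ^i(B) = x^n - 1`, and for
`i ≤ k` the twist `σ^i(B)` is a left multiple of `g`; cancelling `g`, `u` is a common right
multiple of the `x - σ^i(γ)`, hence `u = m v` and `deg m ≤ deg u ≤ k + 1`. Conversely, since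
`x^n - 1` is central, `σ^i(B) (x - σ^i(γ)) = x^n - 1`, so the operator of `σ^i(B)` kills the
image of the operator of `m`. It vanishes on `σ^j(α)` exactly for `j ≠ i`, so that image lies
in the span of the `σ^j(α)`, `j > k`, the kernel has dimension at least `k + 1`, and
`deg m ≥ k + 1`. Hence `v = 1` and `m g = u g = x^n - 1`.
-/

/-- `f` is monic in the (abstractly presented) skew polynomial ring, in terms of the
coordinate map `repinv` sending a skew polynomial to its coefficient family. -/
def SkewMonic {L S : Type*} [Field L] [Ring S] (repinv : S → (ℕ →₀ L)) (f : S) : Prop :=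
  ∃ d : ℕ, repinv f d = 1 ∧ ∀ k, d < k → repinv f k = 0

/-- `g` is the least common left multiple of the family `F`: `g` is monic and the set of
left multiples of `g` is exactly the set of common left multiples of `F`. -/
def IsLCLM {L S : Type*} [Field L] [Ring S] (repinv : S → (ℕ →₀ L))
    (F : Set S) (g : S) : Prop :=
  SkewMonic repinv g ∧ ∀ s : S, (∃ q, s = q * g) ↔ ∀ f ∈ F, ∃ q, s = q * f

/-- `g` is the least common right multiple of the family `F`. -/
def IsLCRM {L S : Type*} [Field L] [Ring S] (repinv : S → (ℕ →₀ L))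
    (F : Set S) (g : S) : Prop :=
  SkewMonic repinv g ∧ ∀ s : S, (∃ q, s = g * q) ↔ ∀ f ∈ F, ∃ q, s = f * q

section

open Polynomial Finset Module

variable {L S : Type*} [Field L] [Ring S]

theorem mul_eq_of_commute {R : Type*} [Ring R] [NoZeroDivisors R] {z a b : R}
    (hz : ∀ s, Commute z s) (h : a * b = z) (ha : a ≠ 0) : b * a = z :=
  mul_left_cancel₀ ha (by rw [← mul_assoc, h, (hz a).eq])

theorem card_le_finrank_ker {K V W : Type*} [Field K] [AddCommGroup V] [Module K V]
    [AddCommGroup W] [Module K W] {n : ℕ} (b : Basis (Fin n) K V) (T : V →ₗ[K] V)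
    (Ψ : Fin n → V →ₗ[K] W) (s : Finset (Fin n)) (hΨT : ∀ i ∈ s, Ψ i ∘ₗ T = 0)
    (hΨb : ∀ i ∈ s, ∀ j ≠ i, Ψ i (b j) = 0) (hΨi : ∀ i ∈ s, Ψ i (b i) ≠ 0) :
    #s ≤ finrank K (LinearMap.ker T) := by
  classical
  have := Module.Finite.of_basis b
  have hrange : LinearMap.range T ≤ Submodule.span K ↑(sᶜ.image b) := by
    rintro _ ⟨y, rfl⟩
    rw [coe_image, b.mem_span_image]
    intro i hi
    rw [coe_compl, Set.mem_compl_iff, mem_coe]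
    intro his
    apply Finsupp.mem_support_iff.1 hi
    have h := LinearMap.congr_fun (hΨT i his) y
    rw [LinearMap.comp_apply, LinearMap.zero_apply, ← b.sum_repr (T y), map_sum,
      sum_eq_single i (fun j _ hji => by rw [map_smul, hΨb i his j hji, smul_zero])
        (by simp), map_smul] at h
    exact (smul_eq_zero.1 h).resolve_right (hΨi i his)
  have hcard : finrank K (LinearMap.range T) ≤ #sᶜ :=
    (Submodule.finrank_mono hrange).trans ((finrank_span_finset_le_card _).trans card_image_le)
  have := T.finrank_range_add_finrank_ker
  rw [finrank_eq_card_basis b, Fintype.card_fin] at this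
  rw [card_compl, Fintype.card_fin] at hcard
  have hs := s.card_le_univ
  rw [Fintype.card_fin] at hs
  omega

theorem pow_apply_mul_inv (σ : L ≃+* L) (i : ℕ) (a : L) :
    (σ ^ i) (σ a * a⁻¹) = σ ((σ ^ i) a) * ((σ ^ i) a)⁻¹ := by
  rw [map_mul, map_inv₀, ← RingAut.mul_apply, ← pow_succ, pow_succ', RingAut.mul_apply]

abbrev fixedField (σ : L ≃+* L) : Subfield L := (σ : L →+* L).eqLocusField (RingHom.id L)

theorem pow_apply_of_mem_fixedField {σ : L ≃+* L} (c : fixedField σ) (j : ℕ) :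
    (σ ^ j) (c : L) = c := by
  rw [RingAut.coe_pow]
  exact Function.iterate_fixed c.2 j

theorem exists_basis_of_existsUnique {σ : L ≃+* L} {n : ℕ} {α : L}
    (hα : ∀ a : L, ∃! c : Fin n → L,
      (∀ i, σ (c i) = c i) ∧ a = ∑ i : Fin n, c i * (σ ^ (i : ℕ)) α) :
    ∃ b : Basis (Fin n) (fixedField σ) L, ∀ i, b i = (σ ^ (i : ℕ)) α := by
  have hli : LinearIndependent (fixedField σ) fun i : Fin n => (σ ^ (i : ℕ)) α := by
    rw [Fintype.linearIndependent_iff]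
    intro c hc i
    obtain ⟨_, _, huniq⟩ := hα 0
    have h1 := huniq (fun i => c i) ⟨fun i => (c i).2, by simpa [Subfield.smul_def] using hc.symm⟩
    have h0 := huniq 0 ⟨fun i => map_zero σ, by simp⟩
    exact Subtype.ext (congrFun (h1.trans h0.symm) i)
  have hsp : ⊤ ≤ Submodule.span (fixedField σ) (Set.range fun i : Fin n => (σ ^ (i : ℕ)) α) := by
    rintro a -
    obtain ⟨c, ⟨hc, rfl⟩, -⟩ := hα a
    exact Submodule.sum_mem _ fun i _ =>
      Submodule.smul_mem _ (⟨c i, hc i⟩ : fixedField σ) (Submodule.subset_span ⟨i, rfl⟩)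
  exact ⟨Basis.mk hli hsp, Basis.mk_apply hli hsp⟩

structure IsSkewPolynomialRing (σ : L ≃+* L) (ι : L →+* S) (x : S) (rep : (ℕ →₀ L) ≃+ S) :
    Prop where
  x_mul : ∀ a : L, x * ι a = ι (σ a) * x
  rep_apply : ∀ p : ℕ →₀ L, rep p = ∑ k ∈ p.support, ι (p k) * x ^ k

-- `f` read as an ordinary polynomial with the same coefficients: additive only, but it carries
-- degrees and leading coefficients.
noncomputable def coeffPoly (rep : (ℕ →₀ L) ≃+ S) : S ≃+ L[X] :=
  rep.symm.trans (AddMonoidAlgebra.coeffAddEquiv.symm.trans (toFinsuppIso L).symm.toAddEquiv)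

theorem coeff_coeffPoly (rep : (ℕ →₀ L) ≃+ S) (f : S) (j : ℕ) :
    (coeffPoly rep f).coeff j = rep.symm f j := rfl

theorem coeffPoly_ne_zero {rep : (ℕ →₀ L) ≃+ S} {f : S} (hf : f ≠ 0) : coeffPoly rep f ≠ 0 :=
  (map_ne_zero_iff _ (coeffPoly rep).injective).2 hf

noncomputable def evalOp (σ : L ≃+* L) (rep : (ℕ →₀ L) ≃+ S) (f : S) :
    L →ₗ[fixedField σ] L where
  toFun v := (coeffPoly rep f).sum fun j a => a * (σ ^ j) v
  map_add' v w := by simp only [map_add, mul_add, Polynomial.sum_add]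
  map_smul' c v := by
    simp only [Subfield.smul_def, smul_eq_mul, map_mul, pow_apply_of_mem_fixedField,
      RingHom.id_apply, Polynomial.sum_def, mul_sum]
    exact sum_congr rfl fun _ _ => mul_left_comm _ _ _

theorem evalOp_zero (σ : L ≃+* L) (rep : (ℕ →₀ L) ≃+ S) : evalOp σ rep (0 : S) = 0 :=
  LinearMap.ext fun v => by simp [evalOp]

theorem evalOp_add (σ : L ≃+* L) (rep : (ℕ →₀ L) ≃+ S) (f g : S) :
    evalOp σ rep (f + g) = evalOp σ rep f + evalOp σ rep g :=
  LinearMap.ext fun v => by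
    simp only [evalOp, map_add, LinearMap.coe_mk, AddHom.coe_mk, LinearMap.add_apply]
    exact sum_add_index _ _ _ (fun _ => zero_mul _) fun _ _ _ => add_mul _ _ _

noncomputable def coeffMap (rep : (ℕ →₀ L) ≃+ S) (τ : L ≃+* L) : S →+ S :=
  rep.toAddMonoidHom.comp
    ((Finsupp.mapRange.addMonoidHom τ.toAddMonoidHom).comp rep.symm.toAddMonoidHom)

theorem skewMonic_iff_monic {rep : (ℕ →₀ L) ≃+ S} {f : S} :
    SkewMonic rep.symm f ↔ (coeffPoly rep f).Monic := by
  constructor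
  · rintro ⟨d, hd, hlt⟩
    have hdeg : (coeffPoly rep f).natDegree = d :=
      natDegree_eq_of_le_of_coeff_ne_zero
        (natDegree_le_iff_coeff_eq_zero.2 fun k hk => hlt k (by exact_mod_cast hk))
        (by rw [coeff_coeffPoly, hd]; exact one_ne_zero)
    rw [Monic, leadingCoeff, hdeg, coeff_coeffPoly, hd]
  · exact fun h => ⟨_, h, fun k hk => coeff_eq_zero_of_natDegree_lt hk⟩

theorem IsLCLM.monic {rep : (ℕ →₀ L) ≃+ S} {F : Set S} {g : S} (h : IsLCLM rep.symm F g) :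
    (coeffPoly rep g).Monic :=
  skewMonic_iff_monic.1 h.1

theorem IsLCLM.exists_eq_mul_of_mem {repinv : S → ℕ →₀ L} {F : Set S} {g f : S}
    (h : IsLCLM repinv F g) (hf : f ∈ F) : ∃ q, g = q * f :=
  (h.2 g).1 ⟨1, (one_mul g).symm⟩ f hf

theorem IsLCLM.exists_eq_mul {repinv : S → ℕ →₀ L} {F : Set S} {g s : S}
    (h : IsLCLM repinv F g) (hs : ∀ f ∈ F, ∃ q, s = q * f) : ∃ q, s = q * g :=
  (h.2 s).2 hs

theorem IsLCRM.monic {rep : (ℕ →₀ L) ≃+ S} {F : Set S} {m : S} (h : IsLCRM rep.symm F m) :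
    (coeffPoly rep m).Monic :=
  skewMonic_iff_monic.1 h.1

theorem IsLCRM.exists_eq_mul_of_mem {repinv : S → ℕ →₀ L} {F : Set S} {m f : S}
    (h : IsLCRM repinv F m) (hf : f ∈ F) : ∃ q, m = f * q :=
  (h.2 m).1 ⟨1, (mul_one m).symm⟩ f hf

theorem IsLCRM.exists_eq_mul {repinv : S → ℕ →₀ L} {F : Set S} {m s : S}
    (h : IsLCRM repinv F m) (hs : ∀ f ∈ F, ∃ q, s = f * q) : ∃ q, s = m * q :=
  (h.2 s).2 hs

namespace IsSkewPolynomialRing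

variable {σ : L ≃+* L} {ι : L →+* S} {x : S} {rep : (ℕ →₀ L) ≃+ S}
  (hS : IsSkewPolynomialRing σ ι x rep)

theorem leadingCoeff_mul_ne_zero {f g : S} (hf : f ≠ 0) (hg : g ≠ 0) :
    (coeffPoly rep f).leadingCoeff *
      (σ ^ (coeffPoly rep f).natDegree) (coeffPoly rep g).leadingCoeff ≠ 0 :=
  mul_ne_zero (leadingCoeff_ne_zero.2 (coeffPoly_ne_zero hf))
    ((_root_.map_ne_zero _).2 (leadingCoeff_ne_zero.2 (coeffPoly_ne_zero hg)))

theorem exists_root_of_mem {α : L} (hα : α ≠ 0) {n : ℕ} {s : S}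
    (hs : s ∈ {s | ∃ i < n, s = x - ι ((σ ^ i) (σ α * α⁻¹))}) :
    ∃ d ≠ 0, s = x - ι (σ d * d⁻¹) := by
  obtain ⟨i, -, rfl⟩ := hs
  exact ⟨_, (_root_.map_ne_zero _).2 hα, by rw [pow_apply_mul_inv]⟩

include hS

theorem x_pow_mul (j : ℕ) (a : L) : x ^ j * ι a = ι ((σ ^ j) a) * x ^ j := by
  induction j generalizing a with
  | zero => simp
  | succ j ih =>
    rw [pow_succ', mul_assoc, ih, ← mul_assoc, hS.x_mul, mul_assoc, ← pow_succ', pow_succ' σ,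
      RingAut.mul_apply]

theorem monomial_mul_monomial (i j : ℕ) (a b : L) :
    ι a * x ^ i * (ι b * x ^ j) = ι (a * (σ ^ i) b) * x ^ (i + j) := by
  rw [mul_assoc, ← mul_assoc (x ^ i), hS.x_pow_mul, mul_assoc, ← pow_add, ← mul_assoc, ← map_mul]

theorem rep_single (k : ℕ) (a : L) : rep (Finsupp.single k a) = ι a * x ^ k := by
  rcases eq_or_ne a 0 with rfl | ha
  · simp [hS.rep_apply]
  · rw [hS.rep_apply, Finsupp.support_single _ ha, sum_singleton, Finsupp.single_eq_same]

theorem induction_on {P : S → Prop} (s : S) (zero : P 0)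
    (monomial : ∀ a k, P (ι a * x ^ k)) (add : ∀ s t, P s → P t → P (s + t)) : P s := by
  rw [← rep.apply_symm_apply s]
  induction rep.symm s using Finsupp.induction with
  | zero => simpa using zero
  | single_add k a p _ _ ih => rw [map_add, hS.rep_single]; exact add _ _ (monomial a k) ih

theorem coeffPoly_monomial (k : ℕ) (a : L) : coeffPoly rep (ι a * x ^ k) = monomial k a := by
  ext j
  rw [coeff_coeffPoly, ← hS.rep_single, AddEquiv.symm_apply_apply, Finsupp.single_apply,
    coeff_monomial]

theorem coeffPoly_C (a : L) : coeffPoly rep (ι a) = C a := by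
  simpa using hS.coeffPoly_monomial 0 a

theorem coeffPoly_x_pow (k : ℕ) : coeffPoly rep (x ^ k) = X ^ k := by
  simpa [← monomial_one_right_eq_X_pow] using hS.coeffPoly_monomial k 1

theorem coeffPoly_one : coeffPoly rep (1 : S) = 1 := by
  simpa using hS.coeffPoly_x_pow 0

theorem coeffPoly_x_sub_C (a : L) : coeffPoly rep (x - ι a) = X - C a := by
  rw [map_sub, hS.coeffPoly_C, ← pow_one x, hS.coeffPoly_x_pow, pow_one]

theorem coeffPoly_x_pow_sub_one (n : ℕ) : coeffPoly rep (x ^ n - 1) = X ^ n - 1 := by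
  rw [map_sub, hS.coeffPoly_x_pow, hS.coeffPoly_one]

theorem coeff_mul (f g : S) (N : ℕ) : (coeffPoly rep (f * g)).coeff N =
    ∑ p ∈ antidiagonal N,
      (coeffPoly rep f).coeff p.1 * (σ ^ p.1) ((coeffPoly rep g).coeff p.2) := by
  induction f using hS.induction_on with
  | zero => simp
  | add f f' hf hf' => simp [add_mul, hf, hf', Finset.sum_add_distrib]
  | monomial a i =>
    induction g using hS.induction_on with
    | zero => simp
    | add g g' hg hg' => simp [mul_add, hg, hg', Finset.sum_add_distrib]
    | monomial b j =>
      simp only [hS.monomial_mul_monomial, hS.coeffPoly_monomial, coeff_monomial]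
      rw [sum_congr rfl (g := fun p => if p = (i, j) then a * (σ ^ i) b else 0), sum_ite_eq']
      · simp only [HasAntidiagonal.mem_antidiagonal]
      · rintro ⟨i', j'⟩ -
        rcases eq_or_ne i i' with rfl | hi <;> rcases eq_or_ne j j' with rfl | hj <;>
          simp [*, Ne.symm]

theorem coeff_mul_natDegree_add (f g : S) :
    (coeffPoly rep (f * g)).coeff
        ((coeffPoly rep f).natDegree + (coeffPoly rep g).natDegree) =
      (coeffPoly rep f).leadingCoeff *
        (σ ^ (coeffPoly rep f).natDegree) (coeffPoly rep g).leadingCoeff := by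
  rw [hS.coeff_mul,
    sum_eq_single ((coeffPoly rep f).natDegree, (coeffPoly rep g).natDegree)]
  · rfl
  · rintro ⟨i, j⟩ hij hne
    rw [HasAntidiagonal.mem_antidiagonal] at hij
    rw [ne_eq, Prod.mk.injEq] at hne
    rcases lt_or_ge (coeffPoly rep f).natDegree i with hi | hi
    · rw [coeff_eq_zero_of_natDegree_lt hi, zero_mul]
    · rw [coeff_eq_zero_of_natDegree_lt (p := coeffPoly rep g) (by omega), map_zero, mul_zero]
  · simp

theorem coeff_mul_eq_zero_of_natDegree_add_lt {f g : S} {N : ℕ}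
    (hN : (coeffPoly rep f).natDegree + (coeffPoly rep g).natDegree < N) :
    (coeffPoly rep (f * g)).coeff N = 0 := by
  rw [hS.coeff_mul]
  refine sum_eq_zero fun ⟨i, j⟩ hij => ?_
  rw [HasAntidiagonal.mem_antidiagonal] at hij
  rcases lt_or_ge (coeffPoly rep f).natDegree i with hi | hi
  · rw [coeff_eq_zero_of_natDegree_lt hi, zero_mul]
  · rw [coeff_eq_zero_of_natDegree_lt (p := coeffPoly rep g) (by omega), map_zero, mul_zero]

theorem natDegree_mul {f g : S} (hf : f ≠ 0) (hg : g ≠ 0) :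
    (coeffPoly rep (f * g)).natDegree =
      (coeffPoly rep f).natDegree + (coeffPoly rep g).natDegree :=
  natDegree_eq_of_le_of_coeff_ne_zero
    (natDegree_le_iff_coeff_eq_zero.2 fun _ hN =>
      hS.coeff_mul_eq_zero_of_natDegree_add_lt (by exact_mod_cast hN))
    (by rw [hS.coeff_mul_natDegree_add]; exact leadingCoeff_mul_ne_zero hf hg)

theorem leadingCoeff_mul {f g : S} (hf : f ≠ 0) (hg : g ≠ 0) :
    (coeffPoly rep (f * g)).leadingCoeff =
      (coeffPoly rep f).leadingCoeff *
        (σ ^ (coeffPoly rep f).natDegree) (coeffPoly rep g).leadingCoeff := by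
  rw [leadingCoeff, hS.natDegree_mul hf hg, hS.coeff_mul_natDegree_add]

theorem noZeroDivisors : NoZeroDivisors S where
  eq_zero_or_eq_zero_of_mul_eq_zero {f g} hfg := by
    by_contra! h
    apply leadingCoeff_mul_ne_zero (σ := σ) (rep := rep) h.1 h.2
    rw [← hS.leadingCoeff_mul h.1 h.2, hfg, map_zero, leadingCoeff_zero]

theorem x_sub_C_ne_zero (a : L) : x - ι a ≠ 0 := fun h =>
  X_sub_C_ne_zero a (by rw [← hS.coeffPoly_x_sub_C, h, map_zero])

theorem natDegree_x_pow_sub_one (n : ℕ) : (coeffPoly rep (x ^ n - 1)).natDegree = n := by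
  rw [hS.coeffPoly_x_pow_sub_one, ← C_1, natDegree_X_pow_sub_C]

theorem monic_x_pow_sub_one {n : ℕ} (hn : n ≠ 0) : (coeffPoly rep (x ^ n - 1)).Monic := by
  rw [hS.coeffPoly_x_pow_sub_one, ← C_1]
  exact monic_X_pow_sub_C 1 hn

theorem x_pow_sub_one_ne_zero {n : ℕ} (hn : n ≠ 0) : x ^ n - 1 ≠ 0 := fun h =>
  (hS.monic_x_pow_sub_one hn).ne_zero (by rw [h, map_zero])

theorem natDegree_add_one_of_x_sub_C_mul_eq {n : ℕ} (hn : n ≠ 0) {γ : L} {B : S}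
    (h : (x - ι γ) * B = x ^ n - 1) : (coeffPoly rep B).natDegree + 1 = n := by
  have hB0 : B ≠ 0 := right_ne_zero_of_mul (by rw [h]; exact hS.x_pow_sub_one_ne_zero hn)
  have hdeg := hS.natDegree_mul (hS.x_sub_C_ne_zero γ) hB0
  rw [h, hS.natDegree_x_pow_sub_one, hS.coeffPoly_x_sub_C, natDegree_X_sub_C] at hdeg
  omega

theorem monic_of_monic_mul {u g : S} (hg : (coeffPoly rep g).Monic)
    (hug : (coeffPoly rep (u * g)).Monic) : (coeffPoly rep u).Monic := by
  have hu : u ≠ 0 := by rintro rfl; simp at hug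
  have hg0 : g ≠ 0 := by rintro rfl; simp at hg
  rw [Monic, ← hug.leadingCoeff, hS.leadingCoeff_mul hu hg0, hg.leadingCoeff, map_one, mul_one]

theorem eq_of_eq_mul_of_natDegree_le {m u v : S} (hm : (coeffPoly rep m).Monic)
    (hu : (coeffPoly rep u).Monic) (huv : u = m * v)
    (hdeg : (coeffPoly rep u).natDegree ≤ (coeffPoly rep m).natDegree) : u = m := by
  have hm0 : m ≠ 0 := by rintro rfl; simp at hm
  have hv0 : v ≠ 0 := by rintro rfl; subst huv; simp at hu
  have hv : (coeffPoly rep v).natDegree = 0 := by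
    have := hS.natDegree_mul hm0 hv0
    rw [← huv] at this
    omega
  have hlead : (coeffPoly rep v).leadingCoeff = 1 := by
    have := hS.leadingCoeff_mul hm0 hv0
    rw [← huv, hu.leadingCoeff, hm.leadingCoeff, one_mul, eq_comm, map_eq_one_iff _
      (σ ^ _).injective] at this
    exact this
  have hv1 : v = 1 := (coeffPoly rep).injective <| by
    have hcoeff : (coeffPoly rep v).coeff 0 = 1 := by rw [← hv]; exact hlead
    rw [eq_C_of_natDegree_eq_zero hv, hcoeff, C_1, hS.coeffPoly_one]
  rw [huv, hv1, mul_one]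

theorem mul_eq_of_natDegree_le {z g u m v : S} (hz : (coeffPoly rep z).Monic)
    (hg : (coeffPoly rep g).Monic) (hm : (coeffPoly rep m).Monic) (hu : z = u * g)
    (hv : u = m * v) (hdeg : (coeffPoly rep z).natDegree ≤
      (coeffPoly rep m).natDegree + (coeffPoly rep g).natDegree) :
    m * g = z := by
  have hu0 : u ≠ 0 := by rintro rfl; rw [zero_mul] at hu; simp [hu] at hz
  have hg0 : g ≠ 0 := by rintro rfl; simp at hg
  have hzdeg := hS.natDegree_mul hu0 hg0
  rw [← hu] at hzdeg
  rw [← hS.eq_of_eq_mul_of_natDegree_le hm (hS.monic_of_monic_mul hg (hu ▸ hz)) hv (by omega), hu]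

theorem exists_eq_mul_sub_add_C (a : L) (f : S) : ∃ q r, f = q * (x - ι a) + ι r := by
  induction f using hS.induction_on with
  | zero => exact ⟨0, 0, by simp⟩
  | add s t hs ht =>
    obtain ⟨q, r, rfl⟩ := hs
    obtain ⟨q', r', rfl⟩ := ht
    exact ⟨q + q', r + r', by rw [map_add]; noncomm_ring⟩
  | monomial b j =>
    induction j generalizing b with
    | zero => exact ⟨0, b, by simp⟩
    | succ j ih =>
      obtain ⟨q, r, hqr⟩ := ih (b * (σ ^ j) a)
      refine ⟨ι b * x ^ j + q, r, ?_⟩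
      have hstep : ι b * x ^ j * ι a = ι (b * (σ ^ j) a) * x ^ j := by
        simpa using hS.monomial_mul_monomial j 0 b a
      rw [add_mul, add_assoc, ← hqr, mul_sub, hstep, pow_succ, mul_assoc]
      abel

theorem evalOp_monomial (a : L) (k : ℕ) (v : L) :
    evalOp σ rep (ι a * x ^ k) v = a * (σ ^ k) v := by
  simp only [evalOp, LinearMap.coe_mk, AddHom.coe_mk, hS.coeffPoly_monomial]
  exact sum_monomial_index _ _ (zero_mul _)

theorem evalOp_mul (f g : S) (v : L) :
    evalOp σ rep (f * g) v = evalOp σ rep f (evalOp σ rep g v) := by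
  induction f using hS.induction_on generalizing v with
  | zero => simp only [zero_mul, evalOp_zero, LinearMap.zero_apply]
  | add f f' hf hf' => simp only [add_mul, evalOp_add, LinearMap.add_apply, hf, hf']
  | monomial a i =>
    induction g using hS.induction_on generalizing v with
    | zero => simp only [mul_zero, evalOp_zero, LinearMap.zero_apply, map_zero]
    | add g g' hg hg' => simp only [mul_add, evalOp_add, LinearMap.add_apply, hg, hg', map_add]
    | monomial b j =>
      rw [hS.monomial_mul_monomial, hS.evalOp_monomial, hS.evalOp_monomial, hS.evalOp_monomial,
        map_mul, pow_add, RingAut.mul_apply, mul_assoc]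

noncomputable def toEnd : S →+* Module.End (fixedField σ) L where
  toFun := evalOp σ rep
  map_one' := LinearMap.ext fun v => by simpa using hS.evalOp_monomial 1 0 v
  map_mul' f g := LinearMap.ext (hS.evalOp_mul f g)
  map_zero' := evalOp_zero σ rep
  map_add' := evalOp_add σ rep

theorem toEnd_monomial_apply (a : L) (k : ℕ) (v : L) :
    hS.toEnd (ι a * x ^ k) v = a * (σ ^ k) v :=
  hS.evalOp_monomial a k v

theorem toEnd_C_apply (a v : L) : hS.toEnd (ι a) v = a * v := by
  simpa using hS.toEnd_monomial_apply a 0 v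

theorem toEnd_x_pow_apply (k : ℕ) (v : L) : hS.toEnd (x ^ k) v = (σ ^ k) v := by
  simpa using hS.toEnd_monomial_apply 1 k v

theorem toEnd_x_sub_C_apply (a v : L) : hS.toEnd (x - ι a) v = σ v - a * v := by
  have hx := hS.toEnd_x_pow_apply 1 v
  rw [pow_one, pow_one] at hx
  rw [map_sub, LinearMap.sub_apply, hS.toEnd_C_apply, hx]

theorem toEnd_x_pow_sub_one {n : ℕ} (hσn : σ ^ n = 1) : hS.toEnd (x ^ n - 1) = 0 :=
  LinearMap.ext fun v => by
    rw [map_sub, map_one, LinearMap.sub_apply, hS.toEnd_x_pow_apply, hσn]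
    simp

theorem exists_eq_mul_iff_toEnd_eq_zero {d : L} (hd : d ≠ 0) (f : S) :
    (∃ q, f = q * (x - ι (σ d * d⁻¹))) ↔ hS.toEnd f d = 0 := by
  have hroot : hS.toEnd (x - ι (σ d * d⁻¹)) d = 0 := by
    rw [hS.toEnd_x_sub_C_apply, mul_assoc, inv_mul_cancel₀ hd, mul_one, sub_self]
  constructor
  · rintro ⟨q, rfl⟩
    rw [map_mul, Module.End.mul_apply, hroot, map_zero]
  · intro h
    obtain ⟨q, r, rfl⟩ := hS.exists_eq_mul_sub_add_C (σ d * d⁻¹) f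
    rw [map_add, LinearMap.add_apply, map_mul, Module.End.mul_apply, hroot, map_zero, zero_add,
      hS.toEnd_C_apply, mul_eq_zero, or_iff_left hd] at h
    exact ⟨q, by rw [h, map_zero, add_zero]⟩

theorem coeffMap_monomial (τ : L ≃+* L) (a : L) (k : ℕ) :
    coeffMap rep τ (ι a * x ^ k) = ι (τ a) * x ^ k := by
  simp [coeffMap, ← hS.rep_single]

theorem coeffMap_mul {τ : L ≃+* L} (hτ : Commute τ σ) (f g : S) :
    coeffMap rep τ (f * g) = coeffMap rep τ f * coeffMap rep τ g := by
  induction f using hS.induction_on with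
  | zero => simp
  | add f f' hf hf' => simp only [add_mul, map_add, hf, hf']
  | monomial a i =>
    induction g using hS.induction_on with
    | zero => simp
    | add g g' hg hg' => simp only [mul_add, map_add, hg, hg']
    | monomial b j =>
      rw [hS.monomial_mul_monomial, hS.coeffMap_monomial, hS.coeffMap_monomial,
        hS.coeffMap_monomial, hS.monomial_mul_monomial, map_mul, ← RingAut.mul_apply τ,
        (hτ.pow_right i).eq, RingAut.mul_apply]

noncomputable def twist (τ : L ≃+* L) (hτ : Commute τ σ) : S →+* S where
  toFun := coeffMap rep τ
  map_one' := by simpa using hS.coeffMap_monomial τ 1 0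
  map_mul' := hS.coeffMap_mul hτ
  map_zero' := map_zero _
  map_add' := map_add _

theorem twist_monomial {τ : L ≃+* L} (hτ : Commute τ σ) (a : L) (k : ℕ) :
    hS.twist τ hτ (ι a * x ^ k) = ι (τ a) * x ^ k :=
  hS.coeffMap_monomial τ a k

theorem twist_x_pow {τ : L ≃+* L} (hτ : Commute τ σ) (k : ℕ) : hS.twist τ hτ (x ^ k) = x ^ k := by
  simpa using hS.twist_monomial hτ 1 k

theorem twist_x_sub_C {τ : L ≃+* L} (hτ : Commute τ σ) (a : L) :
    hS.twist τ hτ (x - ι a) = x - ι (τ a) := by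
  have hC : hS.twist τ hτ (ι a) = ι (τ a) := by simpa using hS.twist_monomial hτ a 0
  have hx := hS.twist_x_pow hτ 1
  rw [pow_one] at hx
  rw [map_sub, hx, hC]

theorem twist_x_pow_sub_one {τ : L ≃+* L} (hτ : Commute τ σ) (n : ℕ) :
    hS.twist τ hτ (x ^ n - 1) = x ^ n - 1 := by
  rw [map_sub, hS.twist_x_pow, map_one]

theorem toEnd_twist_apply {τ : L ≃+* L} (hτ : Commute τ σ) (f : S) (v : L) :
    hS.toEnd (hS.twist τ hτ f) (τ v) = τ (hS.toEnd f v) := by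
  induction f using hS.induction_on with
  | zero => simp
  | add f f' hf hf' => simp only [map_add, LinearMap.add_apply, hf, hf']
  | monomial a k =>
    rw [hS.twist_monomial, hS.toEnd_monomial_apply, hS.toEnd_monomial_apply, map_mul,
      ← RingAut.mul_apply τ, (hτ.pow_right k).eq, RingAut.mul_apply]

theorem commute_x_pow_sub_one {n : ℕ} (hσn : σ ^ n = 1) (s : S) : Commute (x ^ n - 1) s := by
  refine Commute.sub_left ?_ (Commute.one_left s)
  induction s using hS.induction_on with
  | zero => exact Commute.zero_right _
  | add s t hs ht => exact hs.add_right ht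
  | monomial a k =>
    rw [Commute, SemiconjBy, ← mul_assoc, hS.x_pow_mul, hσn, RingAut.one_apply, mul_assoc,
      ← pow_add, add_comm, pow_add, mul_assoc]

theorem exists_isLCLM_insert {F : Set S} {h : S} (hh : IsLCLM rep.symm F h) {d : L}
    (hd : d ≠ 0) : ∃ h', IsLCLM rep.symm (insert (x - ι (σ d * d⁻¹)) F) h' ∧
      (coeffPoly rep h').natDegree ≤ (coeffPoly rep h).natDegree + 1 := by
  have hdvd := hS.exists_eq_mul_iff_toEnd_eq_zero hd
  by_cases hr : hS.toEnd h d = 0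
  · refine ⟨h, ⟨hh.1, fun s => ?_⟩, by omega⟩
    rw [hh.2 s, Set.forall_mem_insert, and_iff_right_of_imp]
    intro hs
    obtain ⟨q, rfl⟩ := hh.exists_eq_mul hs
    rw [hdvd, map_mul, Module.End.mul_apply, hr, map_zero]
  -- adjoin the linear factor whose root is `h d ≠ 0`
  set r := hS.toEnd h d
  have hh0 : h ≠ 0 := by rintro rfl; simpa using hh.monic
  have hfac := hS.exists_eq_mul_iff_toEnd_eq_zero hr
  refine ⟨(x - ι (σ r * r⁻¹)) * h, ⟨skewMonic_iff_monic.2 ?_, fun s => ?_⟩, ?_⟩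
  · rw [Monic, hS.leadingCoeff_mul (hS.x_sub_C_ne_zero _) hh0, hS.coeffPoly_x_sub_C,
      (monic_X_sub_C _).leadingCoeff, hh.monic.leadingCoeff, map_one, one_mul]
  · rw [Set.forall_mem_insert, ← hh.2 s, hdvd]
    constructor
    · rintro ⟨q, rfl⟩
      refine ⟨?_, q * (x - ι (σ r * r⁻¹)), (mul_assoc _ _ _).symm⟩
      have hroot := (hfac (x - ι (σ r * r⁻¹))).1 ⟨1, (one_mul _).symm⟩
      rw [map_mul, map_mul, Module.End.mul_apply, Module.End.mul_apply]
      exact (congrArg _ hroot).trans (map_zero _)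
    · rintro ⟨hs, p, rfl⟩
      rw [map_mul, Module.End.mul_apply, ← hfac] at hs
      obtain ⟨q, rfl⟩ := hs
      exact ⟨q, mul_assoc _ _ _⟩
  · rw [hS.natDegree_mul (hS.x_sub_C_ne_zero _) hh0, hS.coeffPoly_x_sub_C, natDegree_X_sub_C,
      add_comm]

theorem exists_isLCLM_of_le {α : L} (hα : α ≠ 0) {j N : ℕ} (hjN : j ≤ N + 1) {g : S}
    (hg : IsLCLM rep.symm {s | ∃ i, j ≤ i ∧ i ≤ N ∧ s = x - ι ((σ ^ i) (σ α * α⁻¹))} g)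
    (t : ℕ) (ht : t ≤ j) : ∃ B,
      IsLCLM rep.symm {s | ∃ i, j - t ≤ i ∧ i ≤ N ∧ s = x - ι ((σ ^ i) (σ α * α⁻¹))} B ∧
        (coeffPoly rep B).natDegree ≤ (coeffPoly rep g).natDegree + t := by
  induction t with
  | zero => exact ⟨g, hg, le_rfl⟩
  | succ t ih =>
    obtain ⟨B, hB, hdeg⟩ := ih (by omega)
    obtain ⟨B', hB', hdeg'⟩ :=
      hS.exists_isLCLM_insert hB ((_root_.map_ne_zero (σ ^ (j - (t + 1)))).2 hα)
    refine ⟨B', ?_, by omega⟩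
    convert hB' using 1
    ext s
    simp only [Set.mem_insert_iff, Set.mem_ofPred_eq, ← pow_apply_mul_inv]
    constructor
    · rintro ⟨i, hi, hiN, rfl⟩
      rcases eq_or_lt_of_le hi with rfl | hi
      · exact Or.inl rfl
      · exact Or.inr ⟨i, by omega, hiN, rfl⟩
    · rintro (rfl | ⟨i, hi, hiN, rfl⟩)
      · exact ⟨_, le_rfl, by omega, rfl⟩
      · exact ⟨i, by omega, hiN, rfl⟩

theorem toEnd_apply_eq_zero_of_isLCLM {F : Set S} {B : S} (hB : IsLCLM rep.symm F B) {d : L}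
    (hd : d ≠ 0) (hmem : x - ι (σ d * d⁻¹) ∈ F) : hS.toEnd B d = 0 :=
  (hS.exists_eq_mul_iff_toEnd_eq_zero hd B).1 (hB.exists_eq_mul_of_mem hmem)

theorem exists_eq_mul_of_toEnd_eq_zero {F : Set S} {z : S} (hz : IsLCLM rep.symm F z)
    (hF : ∀ s ∈ F, ∃ d ≠ 0, s = x - ι (σ d * d⁻¹)) {f : S} (hf : hS.toEnd f = 0) :
    ∃ q, f = q * z :=
  hz.exists_eq_mul fun s hs => by
    obtain ⟨d, hd, rfl⟩ := hF s hs
    exact (hS.exists_eq_mul_iff_toEnd_eq_zero hd f).2 (by rw [hf, LinearMap.zero_apply])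

theorem natDegree_le_of_toEnd_eq_zero {F : Set S} {z : S} (hz : IsLCLM rep.symm F z)
    (hF : ∀ s ∈ F, ∃ d ≠ 0, s = x - ι (σ d * d⁻¹)) {f : S} (hf0 : f ≠ 0)
    (hf : hS.toEnd f = 0) : (coeffPoly rep z).natDegree ≤ (coeffPoly rep f).natDegree := by
  obtain ⟨q, rfl⟩ := hS.exists_eq_mul_of_toEnd_eq_zero hz hF hf
  have hq0 : q ≠ 0 := by rintro rfl; exact hf0 (zero_mul z)
  have hz0 : z ≠ 0 := by rintro rfl; exact hf0 (mul_zero q)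
  rw [hS.natDegree_mul hq0 hz0]
  omega

theorem card_le_natDegree_of_linearIndependent {f : S} (hf : hS.toEnd f ≠ 0) {m : ℕ}
    {v : Fin m → L} (hv : LinearIndependent (fixedField σ) v)
    (hker : ∀ i, hS.toEnd f (v i) = 0) : m ≤ (coeffPoly rep f).natDegree := by
  -- split off the factor with root `v 0`; `σ - σ(v 0)/(v 0)` maps the other `v i` to
  -- independent zeros of the quotient
  induction m generalizing f with
  | zero => exact Nat.zero_le _
  | succ m ih =>
    set d := v 0
    have hd : d ≠ 0 := hv.ne_zero 0
    obtain ⟨q, rfl⟩ := (hS.exists_eq_mul_iff_toEnd_eq_zero hd f).2 (hker 0)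
    set T := hS.toEnd (x - ι (σ d * d⁻¹))
    have hq : hS.toEnd q ≠ 0 := fun h => hf (by rw [map_mul, h, zero_mul])
    have hq0 : q ≠ 0 := by rintro rfl; exact hq (map_zero _)
    have hkerT : LinearMap.ker T ≤ (fixedField σ) ∙ d := by
      intro w hw
      rw [LinearMap.mem_ker, hS.toEnd_x_sub_C_apply, sub_eq_zero] at hw
      have hσd : σ d ≠ 0 := (_root_.map_ne_zero σ).2 hd
      refine Submodule.mem_span_singleton.2 ⟨⟨w * d⁻¹, ?_⟩, ?_⟩
      · change σ (w * d⁻¹) = w * d⁻¹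
        rw [map_mul, map_inv₀, hw]
        field_simp
      · rw [Subfield.smul_def, smul_eq_mul]
        field_simp
    rw [← Fin.cons_self_tail v, linearIndependent_finCons] at hv
    have hu : LinearIndependent (fixedField σ) (T ∘ Fin.tail v) :=
      hv.1.map ((Submodule.disjoint_span_singleton.2 fun h => (hv.2 h).elim).mono_right hkerT)
    have := ih hq hu fun i => by
      rw [Function.comp_apply, ← Module.End.mul_apply, ← map_mul]
      exact hker i.succ
    rw [hS.natDegree_mul hq0 (hS.x_sub_C_ne_zero _), hS.coeffPoly_x_sub_C, natDegree_X_sub_C]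
    omega

theorem finrank_ker_le_natDegree [FiniteDimensional (fixedField σ) L] {f : S}
    (hf : hS.toEnd f ≠ 0) :
    finrank (fixedField σ) (LinearMap.ker (hS.toEnd f)) ≤ (coeffPoly rep f).natDegree :=
  let b := Module.finBasis (fixedField σ) (LinearMap.ker (hS.toEnd f))
  hS.card_le_natDegree_of_linearIndependent hf
    (b.linearIndependent.map' _ (LinearMap.ker (hS.toEnd f)).ker_subtype) fun i => (b i).2

noncomputable abbrev twistPow (i : ℕ) : S →+* S :=
  hS.twist (σ ^ i) ((Commute.refl σ).pow_left i)

theorem x_sub_C_mul_twist_pow {n : ℕ} {γ : L} {B : S} (hγB : (x - ι γ) * B = x ^ n - 1)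
    (i : ℕ) : (x - ι ((σ ^ i) γ)) * hS.twistPow i B =
      x ^ n - 1 := by
  rw [← hS.twist_x_sub_C ((Commute.refl σ).pow_left i), ← map_mul, hγB,
    hS.twist_x_pow_sub_one]

theorem twist_pow_mul_x_sub_C {n : ℕ} (hσn : σ ^ n = 1) {γ : L} {B : S}
    (hγB : (x - ι γ) * B = x ^ n - 1) (i : ℕ) :
    hS.twistPow i B * (x - ι ((σ ^ i) γ)) = x ^ n - 1 :=
  have := hS.noZeroDivisors
  mul_eq_of_commute (hS.commute_x_pow_sub_one hσn) (hS.x_sub_C_mul_twist_pow hγB i)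
    (hS.x_sub_C_ne_zero _)

theorem toEnd_twist_pow_basis_of_ne {n : ℕ} (hσn : σ ^ n = 1) {α : L}
    {b : Basis (Fin n) (fixedField σ) L} (hb : ∀ i, b i = (σ ^ (i : ℕ)) α) {B : S}
    (hB : ∀ r, 1 ≤ r → r < n → hS.toEnd B ((σ ^ r) α) = 0) {i j : Fin n} (hji : j ≠ i) :
    hS.toEnd (hS.twistPow i B) (b j) = 0 := by
  obtain ⟨r, hr1, hrn, hr⟩ : ∃ r, 1 ≤ r ∧ r < n ∧ σ ^ (j : ℕ) = σ ^ (i : ℕ) * σ ^ r := by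
    rcases Nat.lt_or_gt_of_ne (Fin.val_injective.ne hji) with h | h
    · refine ⟨j + n - i, by omega, by omega, ?_⟩
      rw [← pow_add, show (i : ℕ) + (j + n - i) = j + n by omega, pow_add, hσn, mul_one]
    · refine ⟨j - i, by omega, by omega, ?_⟩
      rw [← pow_add, show (i : ℕ) + (j - i) = j by omega]
  rw [hb, hr, RingAut.mul_apply, hS.toEnd_twist_apply, hB r hr1 hrn, map_zero]

theorem toEnd_apply_ne_zero {n : ℕ} (hn : 0 < n) {α : L} (hα : α ≠ 0)
    {b : Basis (Fin n) (fixedField σ) L} (hb : ∀ i, b i = (σ ^ (i : ℕ)) α)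
    (hfull : IsLCLM rep.symm {s | ∃ i < n, s = x - ι ((σ ^ i) (σ α * α⁻¹))} (x ^ n - 1))
    {γ : L} {B : S} (hγB : (x - ι γ) * B = x ^ n - 1)
    (hB : ∀ r, 1 ≤ r → r < n → hS.toEnd B ((σ ^ r) α) = 0) : hS.toEnd B α ≠ 0 := by
  intro hBα
  have hB0 : hS.toEnd B = 0 := b.ext fun i => by
    rw [hb, LinearMap.zero_apply]
    rcases Nat.eq_zero_or_pos i with hi | hi
    · rwa [hi, pow_zero, RingAut.one_apply]
    · exact hB i hi i.2
  have hBne : B ≠ 0 := by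
    rintro rfl
    exact hS.x_pow_sub_one_ne_zero hn.ne' (by rw [← hγB, mul_zero])
  have := hS.natDegree_le_of_toEnd_eq_zero hfull (fun _ => exists_root_of_mem hα) hBne hB0
  have := hS.natDegree_add_one_of_x_sub_C_mul_eq hn.ne' hγB
  rw [hS.natDegree_x_pow_sub_one] at *
  omega

theorem succ_le_natDegree_of_forall_exists_eq_mul {n : ℕ} (hn : 0 < n) (hσn : σ ^ n = 1)
    {α : L} (hα : α ≠ 0) {b : Basis (Fin n) (fixedField σ) L} (hb : ∀ i, b i = (σ ^ (i : ℕ)) α)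
    (hfull : IsLCLM rep.symm {s | ∃ i < n, s = x - ι ((σ ^ i) (σ α * α⁻¹))} (x ^ n - 1))
    {γ : L} {B : S} (hγB : (x - ι γ) * B = x ^ n - 1)
    (hB : ∀ r, 1 ≤ r → r < n → hS.toEnd B ((σ ^ r) α) = 0) {k : ℕ} (hk : k < n) {m : S}
    (hm0 : m ≠ 0) (hm : ∀ i ≤ k, ∃ q, m = (x - ι ((σ ^ i) γ)) * q) :
    k + 1 ≤ (coeffPoly rep m).natDegree := by
  by_cases hm' : hS.toEnd m = 0
  · have := hS.natDegree_le_of_toEnd_eq_zero hfull (fun _ => exists_root_of_mem hα) hm0 hm'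
    rw [hS.natDegree_x_pow_sub_one] at this
    omega
  -- the operator of `σ^i(B)`, `i ≤ k`, kills the image of `m` and detects the basis vector `σ^i α`
  have := Module.Finite.of_basis b
  have hker := card_le_finrank_ker b (hS.toEnd m)
    (fun i => hS.toEnd (hS.twistPow i B))
    (Iic ⟨k, hk⟩) (fun i hi => ?_) (fun i _ j hji => hS.toEnd_twist_pow_basis_of_ne hσn hb hB hji)
    fun i _ => by
      rw [hb, hS.toEnd_twist_apply]
      exact (_root_.map_ne_zero _).2 (hS.toEnd_apply_ne_zero hn hα hb hfull hγB hB)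
  · rw [Fin.card_Iic] at hker
    exact hker.trans (hS.finrank_ker_le_natDegree hm')
  · have hik : i ≤ ⟨k, hk⟩ := mem_Iic.1 hi
    obtain ⟨q, rfl⟩ := hm i hik
    rw [← Module.End.mul_eq_comp, ← map_mul, ← mul_assoc, hS.twist_pow_mul_x_sub_C hσn hγB,
      map_mul, hS.toEnd_x_pow_sub_one hσn, zero_mul]

theorem exists_eq_x_sub_C_mul {n k : ℕ} {β γ : L} {B g u : S} (hγB : (x - ι γ) * B = x ^ n - 1)
    (hB : IsLCLM rep.symm {s | ∃ i, 1 ≤ i ∧ i ≤ n - 1 ∧ s = x - ι ((σ ^ i) β)} B)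
    (hg : IsLCLM rep.symm {s | ∃ i, k + 1 ≤ i ∧ i ≤ n - 1 ∧ s = x - ι ((σ ^ i) β)} g)
    (hu : x ^ n - 1 = u * g) {i : ℕ} (hi : i ≤ k) : ∃ w, u = (x - ι ((σ ^ i) γ)) * w := by
  have := hS.noZeroDivisors
  obtain ⟨w, hw⟩ := hg.exists_eq_mul (s := hS.twistPow i B)
    fun f ⟨j, hj1, hj2, hf⟩ => by
      obtain ⟨q, hq⟩ := hB.exists_eq_mul_of_mem ⟨j - i, by omega, by omega, rfl⟩
      refine ⟨hS.twistPow i q, ?_⟩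
      rw [hf, hq, map_mul, hS.twist_x_sub_C, ← RingAut.mul_apply, ← pow_add,
        show i + (j - i) = j by omega]
  refine ⟨w, mul_right_cancel₀ (b := g) (fun hg0 => ?_) ?_⟩
  · simpa [hg0] using hg.monic
  · rw [← hu, mul_assoc, ← hw, hS.x_sub_C_mul_twist_pow hγB]

end IsSkewPolynomialRing

end

/-- Let `L` be a field with automorphism `σ` of finite order `n`, with
`{α, σ(α), …, σ^{n-1}(α)}` a normal basis of `L` over the fixed field `K = L^σ`
(expressed by unique representability with `σ`-invariant coefficients), and
`β = σ(α)α⁻¹`. If `γ ∈ L` satisfies `(x−γ)·lclm(x−σ(β),…,x−σ^{n-1}(β)) = x^n − 1` in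
`L[x;σ]`, then for all `0 ≤ k ≤ n−1`,
`lcrm(x−γ,…,x−σ^k(γ)) · lclm(x−σ^{k+1}(β),…,x−σ^{n-1}(β)) = x^n − 1`. -/
theorem stmt15 {L S : Type*} [Field L] [Ring S]
    (σ : L ≃+* L) (n : ℕ) (hn : 0 < n) (hσn : ∀ a : L, (⇑σ)^[n] a = a)
    (ι : L →+* S) (x : S) (hx : ∀ a : L, x * ι a = ι (σ a) * x)
    (rep : (ℕ →₀ L) ≃+ S)
    (hrep : ∀ p : ℕ →₀ L, rep p = ∑ k ∈ p.support, ι (p k) * x ^ k)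
    (α : L)
    (hα : ∀ a : L, ∃! c : Fin n → L,
      (∀ i, σ (c i) = c i) ∧ a = ∑ i : Fin n, c i * (⇑σ)^[(i : ℕ)] α)
    (β : L) (hβ : β = σ α * α⁻¹)
    (hfull : IsLCLM (⇑rep.symm) {s | ∃ i < n, s = x - ι ((⇑σ)^[i] β)} (x ^ n - 1))
    (γ : L)
    (hγ : ∀ N : S, IsLCLM (⇑rep.symm)
        {s | ∃ i, 1 ≤ i ∧ i ≤ n - 1 ∧ s = x - ι ((⇑σ)^[i] β)} N →
      (x - ι γ) * N = x ^ n - 1)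
    (k : ℕ) (hk : k ≤ n - 1) :
    ∀ m g : S,
      IsLCRM (⇑rep.symm) {s | ∃ i ≤ k, s = x - ι ((⇑σ)^[i] γ)} m →
      IsLCLM (⇑rep.symm) {s | ∃ i, k + 1 ≤ i ∧ i ≤ n - 1 ∧ s = x - ι ((⇑σ)^[i] β)} g →
      m * g = x ^ n - 1 := by
  intro m g hm hg
  have hS : IsSkewPolynomialRing σ ι x rep := ⟨hx, hrep⟩
  have hσn' : σ ^ n = 1 := RingEquiv.ext fun a => by rw [RingAut.coe_pow, hσn]; rfl
  simp only [← RingAut.coe_pow] at hα hfull hγ hm hg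
  subst hβ
  obtain ⟨b, hb⟩ := exists_basis_of_existsUnique hα
  have hα0 : α ≠ 0 := by simpa [hb] using b.ne_zero ⟨0, hn⟩
  obtain ⟨B, hB, hBg⟩ := hS.exists_isLCLM_of_le hα0 (by omega) hg k (by omega)
  rw [Nat.add_sub_cancel_left] at hB
  have hγB := hγ B hB
  have hBroot : ∀ r, 1 ≤ r → r < n → hS.toEnd B ((σ ^ r) α) = 0 := fun r h1 h2 =>
    hS.toEnd_apply_eq_zero_of_isLCLM hB ((_root_.map_ne_zero _).2 hα0)
      ⟨r, h1, by omega, by rw [pow_apply_mul_inv]⟩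
  obtain ⟨u, hu⟩ : ∃ u, x ^ n - 1 = u * g := hg.exists_eq_mul fun f ⟨i, _, hi, hf⟩ =>
    hfull.exists_eq_mul_of_mem ⟨i, by omega, hf⟩
  obtain ⟨v, hv⟩ : ∃ v, u = m * v := hm.exists_eq_mul fun f ⟨i, hi, hf⟩ =>
    hf ▸ hS.exists_eq_x_sub_C_mul hγB hB hg hu hi
  have hmdeg := hS.succ_le_natDegree_of_forall_exists_eq_mul hn hσn' hα0 hb hfull hγB hBroot
    (by omega : k < n) (by rintro rfl; simpa using hm.monic)
    fun i hi => hm.exists_eq_mul_of_mem ⟨i, hi, rfl⟩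
  have hBdeg := hS.natDegree_add_one_of_x_sub_C_mul_eq hn.ne' hγB
  refine hS.mul_eq_of_natDegree_le (hS.monic_x_pow_sub_one hn.ne') hg.monic hm.monic hu hv ?_
  rw [hS.natDegree_x_pow_sub_one]
  omega
end

section
/- Let L be a field with automorphism σ of finite order n, ℛ = L[x;σ]/⟨x^n−1⟩, Θ the involution Θ(Σ a_i x^i) = Σ σ^{−i}(a_i)x^{−i}. If h = lcrm{x − σ^i(γ) : 0 ≤ i ≤ k−1} in ℛ and γ' = σ(γ)^{-1}, then ℛ·Θ(h) = ℛ·lclm{x − σ^i(γ') : 0 ≤ i ≤ k−1}. -/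
/-!
On monomials `Θ(a xʲ) = x⁻ʲ a` (with `x⁻¹ = x ^ (n - 1)`), so by bi-additivity `Θ` is an
anti-automorphism of order two. An anti-involution turns the right ideal `hℛ = ⋂ (x − σⁱγ)ℛ` into
the left ideal `ℛΘ(h) = ⋂ ℛΘ(x − σⁱγ)`, and `Θ(x − b) = x⁻¹ − b = −x⁻¹σ(b) · (x − σ(b)⁻¹)` is a
unit multiple of `x − σ(b)⁻¹`; for `b = σⁱγ` this is `x − σⁱ(γ')`.
-/

theorem exists_eq_mul_map_iff_dvd {R : Type*} [Ring R] {Θ : R → R}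
    (hmul : ∀ r s, Θ (r * s) = Θ s * Θ r) (hinv : Function.Involutive Θ) (a s : R) :
    (∃ q, s = q * Θ a) ↔ a ∣ Θ s := by
  constructor
  · rintro ⟨q, rfl⟩
    exact ⟨Θ q, by rw [hmul, hinv]⟩
  · rintro ⟨q, hq⟩
    exact ⟨Θ q, by rw [← hmul, ← hq, hinv]⟩

theorem exists_eq_mul_units_mul_iff {R : Type*} [Ring R] (u : Rˣ) (g s : R) :
    (∃ q, s = q * (u * g)) ↔ ∃ q, s = q * g := by
  constructor
  · rintro ⟨q, rfl⟩
    exact ⟨q * u, (mul_assoc _ _ _).symm⟩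
  · rintro ⟨q, rfl⟩
    exact ⟨q * ↑u⁻¹, by rw [mul_assoc, Units.inv_mul_cancel_left]⟩

theorem exists_eq_mul_map_iff_of_lcrm {R κ : Type*} [Ring R] {Θ : R → R}
    (hmul : ∀ r s, Θ (r * s) = Θ s * Θ r) (hinv : Function.Involutive Θ)
    {p : κ → Prop} {f g : κ → R} (hfg : ∀ i, p i → ∃ u : Rˣ, Θ (f i) = u * g i)
    {h h' : R} (hh : ∀ s, h ∣ s ↔ ∀ i, p i → f i ∣ s)
    (hh' : ∀ s, (∃ q, s = q * h') ↔ ∀ i, p i → ∃ q, s = q * g i) (s : R) :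
    (∃ q, s = q * Θ h) ↔ ∃ q, s = q * h' := by
  rw [exists_eq_mul_map_iff_dvd hmul hinv, hh, hh']
  refine forall₂_congr fun i hi => ?_
  obtain ⟨u, hu⟩ := hfg i hi
  rw [← exists_eq_mul_map_iff_dvd hmul hinv, hu, exists_eq_mul_units_mul_iff]

theorem pow_mul_eq_iterate_mul {M α : Type*} [Monoid M] {f : α → M} {g : α → α} {z : M}
    (h : ∀ a, z * f a = f (g a) * z) (j : ℕ) (a : α) :
    z ^ j * f a = f (g^[j] a) * z ^ j := by
  induction j generalizing a with
  | zero => simp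
  | succ j ih =>
    rw [pow_succ, mul_assoc, h, ← mul_assoc, ih, Function.iterate_succ_apply, mul_assoc]

section PowPred

variable {R : Type*} [Ring R] {n : ℕ} {x : R}

theorem pow_pred_mul_eq_one (hn : 0 < n) (hxn : x ^ n = 1) : x ^ (n - 1) * x = 1 := by
  rw [pow_sub_one_mul hn.ne', hxn]

theorem mul_pow_pred_eq_one (hn : 0 < n) (hxn : x ^ n = 1) : x * x ^ (n - 1) = 1 := by
  rw [mul_pow_sub_one hn.ne', hxn]

theorem pow_pred_pow_pred (hn : 0 < n) (hxn : x ^ n = 1) : (x ^ (n - 1)) ^ (n - 1) = x := by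
  calc (x ^ (n - 1)) ^ (n - 1) = (x ^ (n - 1)) ^ (n - 1) * (x ^ (n - 1) * x) := by
        rw [pow_pred_mul_eq_one hn hxn, mul_one]
    _ = ((x ^ n) ^ (n - 1)) * x := by
        rw [← mul_assoc, pow_sub_one_mul hn.ne', ← pow_mul, ← pow_mul, mul_comm]
    _ = x := by rw [hxn, one_pow, one_mul]

end PowPred

section SkewInvolution

variable {L R : Type*} [CommRing L] [Ring R] {n : ℕ} {σ : L ≃+* L} {ι : L →+* R} {x : R}

theorem pow_pred_mul_map (hn : 0 < n) (hx : ∀ a : L, x * ι a = ι (σ a) * x)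
    (hxn : x ^ n = 1) (a : L) : x ^ (n - 1) * ι a = ι (σ.symm a) * x ^ (n - 1) := by
  have ha : ι a = x * ι (σ.symm a) * x ^ (n - 1) := by
    rw [hx, σ.apply_symm_apply, mul_assoc, mul_pow_pred_eq_one hn hxn, mul_one]
  rw [ha, ← mul_assoc, ← mul_assoc, pow_pred_mul_eq_one hn hxn, one_mul]

theorem map_mul_pow_pred_pow (hn : 0 < n) (hx : ∀ a : L, x * ι a = ι (σ a) * x)
    (hxn : x ^ n = 1) (i : ℕ) (b : L) :
    ι b * (x ^ (n - 1)) ^ i = (x ^ (n - 1)) ^ i * ι ((⇑σ)^[i] b) := by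
  rw [pow_mul_eq_iterate_mul (pow_pred_mul_map hn hx hxn),
    Function.LeftInverse.iterate σ.symm_apply_apply i b]

variable (σ ι x) (rep : (Fin n → L) ≃+ R)

def skewInvolution : R →+ R where
  toFun r := ∑ i : Fin n, ι ((⇑σ.symm)^[(i : ℕ)] (rep.symm r i)) * (x ^ (n - 1)) ^ (i : ℕ)
  map_zero' := by simp
  map_add' r s := by simp [iterate_map_add, add_mul, Finset.sum_add_distrib]

variable {σ ι x rep}

theorem induction_on_monomial
    (hrep : ∀ c : Fin n → L, rep c = ∑ i : Fin n, ι (c i) * x ^ (i : ℕ)) {P : R → Prop}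
    (zero : P 0) (add : ∀ r s, P r → P s → P (r + s))
    (monomial : ∀ (a : L) (j : ℕ), P (ι a * x ^ j))
    (r : R) : P r := by
  obtain ⟨c, rfl⟩ := rep.surjective r
  rw [hrep]
  exact Finset.sum_induction _ P add zero fun i _ => monomial _ _

theorem skewInvolution_monomial (hn : 0 < n) (hx : ∀ a : L, x * ι a = ι (σ a) * x)
    (hxn : x ^ n = 1) (hrep : ∀ c : Fin n → L, rep c = ∑ i : Fin n, ι (c i) * x ^ (i : ℕ))
    (a : L) (j : ℕ) : skewInvolution σ ι x rep (ι a * x ^ j) = (x ^ (n - 1)) ^ j * ι a := by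
  have hsingle (i : Fin n) : rep.symm (ι a * x ^ (i : ℕ)) = Pi.single i a := by
    rw [AddEquiv.symm_apply_eq, hrep, Finset.sum_eq_single i (fun b _ hb => by simp [hb])
      (by simp), Pi.single_eq_same]
  have hlt (i : Fin n) :
      skewInvolution σ ι x rep (ι a * x ^ (i : ℕ)) = (x ^ (n - 1)) ^ (i : ℕ) * ι a := by
    rw [pow_mul_eq_iterate_mul (pow_pred_mul_map hn hx hxn)]
    simp only [skewInvolution, AddMonoidHom.coe_mk, ZeroHom.coe_mk, hsingle]
    rw [Finset.sum_eq_single i (fun b _ hb => by simp [hb]) (by simp), Pi.single_eq_same]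
  have hyn : (x ^ (n - 1)) ^ n = 1 := by rw [← pow_mul, mul_comm, pow_mul, hxn, one_pow]
  simpa only [← pow_eq_pow_mod _ hxn, ← pow_eq_pow_mod _ hyn] using hlt ⟨j % n, Nat.mod_lt _ hn⟩

theorem skewInvolution_map (hn : 0 < n) (hx : ∀ a : L, x * ι a = ι (σ a) * x)
    (hxn : x ^ n = 1) (hrep : ∀ c : Fin n → L, rep c = ∑ i : Fin n, ι (c i) * x ^ (i : ℕ))
    (a : L) : skewInvolution σ ι x rep (ι a) = ι a := by
  simpa using skewInvolution_monomial hn hx hxn hrep a 0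

theorem skewInvolution_pow (hn : 0 < n) (hx : ∀ a : L, x * ι a = ι (σ a) * x)
    (hxn : x ^ n = 1) (hrep : ∀ c : Fin n → L, rep c = ∑ i : Fin n, ι (c i) * x ^ (i : ℕ))
    (j : ℕ) : skewInvolution σ ι x rep (x ^ j) = (x ^ (n - 1)) ^ j := by
  simpa using skewInvolution_monomial hn hx hxn hrep 1 j

theorem skewInvolution_sub_map (hn : 0 < n) (hx : ∀ a : L, x * ι a = ι (σ a) * x)
    (hxn : x ^ n = 1) (hrep : ∀ c : Fin n → L, rep c = ∑ i : Fin n, ι (c i) * x ^ (i : ℕ))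
    (a : L) : skewInvolution σ ι x rep (x - ι a) = x ^ (n - 1) - ι a := by
  rw [map_sub, skewInvolution_map hn hx hxn hrep]
  simpa using skewInvolution_pow hn hx hxn hrep 1

theorem skewInvolution_mul (hn : 0 < n) (hx : ∀ a : L, x * ι a = ι (σ a) * x)
    (hxn : x ^ n = 1) (hrep : ∀ c : Fin n → L, rep c = ∑ i : Fin n, ι (c i) * x ^ (i : ℕ))
    (r s : R) :
    skewInvolution σ ι x rep (r * s) = skewInvolution σ ι x rep s * skewInvolution σ ι x rep r := by
  induction r using induction_on_monomial hrep with
  | zero => simp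
  | add r r' hr hr' => rw [add_mul, map_add, map_add, hr, hr', mul_add]
  | monomial a i =>
    induction s using induction_on_monomial hrep with
    | zero => simp
    | add s s' hs hs' => rw [mul_add, map_add, map_add, hs, hs', add_mul]
    | monomial b j =>
      have hprod : ι a * x ^ i * (ι b * x ^ j) = ι (a * (⇑σ)^[i] b) * x ^ (i + j) := by
        rw [map_mul, pow_add, mul_assoc (ι a), ← mul_assoc (x ^ i), pow_mul_eq_iterate_mul hx]
        simp only [mul_assoc]
      rw [hprod]
      simp only [skewInvolution_monomial hn hx hxn hrep]
      calc (x ^ (n - 1)) ^ (i + j) * ι (a * (⇑σ)^[i] b)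
          = (x ^ (n - 1)) ^ j * ((x ^ (n - 1)) ^ i * ι ((⇑σ)^[i] b)) * ι a := by
            rw [add_comm, pow_add, mul_comm a, map_mul]
            simp only [mul_assoc]
        _ = (x ^ (n - 1)) ^ j * ι b * ((x ^ (n - 1)) ^ i * ι a) := by
            rw [← map_mul_pow_pred_pow hn hx hxn]
            simp only [mul_assoc]

theorem skewInvolution_involutive (hn : 0 < n) (hx : ∀ a : L, x * ι a = ι (σ a) * x)
    (hxn : x ^ n = 1) (hrep : ∀ c : Fin n → L, rep c = ∑ i : Fin n, ι (c i) * x ^ (i : ℕ)) :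
    Function.Involutive (skewInvolution σ ι x rep) := by
  intro r
  induction r using induction_on_monomial hrep with
  | zero => simp
  | add r s hr hs => rw [map_add, map_add, hr, hs]
  | monomial a j =>
    rw [skewInvolution_monomial hn hx hxn hrep, skewInvolution_mul hn hx hxn hrep,
      skewInvolution_map hn hx hxn hrep, ← pow_mul, skewInvolution_pow hn hx hxn hrep, pow_mul,
      pow_pred_pow_pred hn hxn]

end SkewInvolution

theorem exists_units_pow_pred_sub_eq_mul {L R : Type*} [Field L] [Ring R] {n : ℕ}
    {σ : L ≃+* L} {ι : L →+* R} {x : R} (hn : 0 < n) (hx : ∀ a : L, x * ι a = ι (σ a) * x)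
    (hxn : x ^ n = 1) {a : L} (ha : a ≠ 0) :
    ∃ u : Rˣ, x ^ (n - 1) - ι a = u * (x - ι (σ a)⁻¹) := by
  have hσa : σ a ≠ 0 := (map_ne_zero σ).mpr ha
  have hinv : ι (σ a) * ι (σ a)⁻¹ = 1 := by rw [← map_mul, mul_inv_cancel₀ hσa, map_one]
  have hinv' : ι (σ a)⁻¹ * ι (σ a) = 1 := by rw [← map_mul, inv_mul_cancel₀ hσa, map_one]
  refine ⟨⟨-(x ^ (n - 1) * ι (σ a)), -(ι (σ a)⁻¹ * x), ?_, ?_⟩, ?_⟩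
  · rw [neg_mul_neg, mul_assoc, ← mul_assoc (ι _), hinv, one_mul, pow_pred_mul_eq_one hn hxn]
  · rw [neg_mul_neg, mul_assoc, ← mul_assoc x, mul_pow_pred_eq_one hn hxn, one_mul, hinv']
  · rw [Units.val_mk, neg_mul, mul_sub, mul_assoc, mul_assoc, ← hx, ← mul_assoc,
      pow_pred_mul_eq_one hn hxn, one_mul, hinv, mul_one]
    abel

theorem stmt16_general {L R : Type*} [Field L] [Ring R]
    (σ : L ≃+* L) (n : ℕ) (hn : 0 < n)
    (ι : L →+* R) (x : R) (hx : ∀ a : L, x * ι a = ι (σ a) * x) (hxn : x ^ n = 1)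
    (rep : (Fin n → L) ≃+ R)
    (hrep : ∀ c : Fin n → L, rep c = ∑ i : Fin n, ι (c i) * x ^ (i : ℕ))
    (Θ : R → R)
    (hΘ : ∀ r : R, Θ r = ∑ i : Fin n,
      ι ((⇑σ.symm)^[(i : ℕ)] (rep.symm r i)) * (x ^ (n - 1)) ^ (i : ℕ))
    (γ : L) (hγ0 : γ ≠ 0) (k : ℕ) (h h' : R)
    (hh : ∀ s : R, (∃ q, s = h * q) ↔ ∀ i < k, ∃ q, s = (x - ι ((⇑σ)^[i] γ)) * q)
    (hh' : ∀ s : R, (∃ q, s = q * h') ↔ ∀ i < k, ∃ q, s = q * (x - ι ((⇑σ)^[i] (σ γ)⁻¹))) :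
    ∀ s : R, (∃ q, s = q * Θ h) ↔ (∃ q, s = q * h') := by
  obtain rfl : Θ = skewInvolution σ ι x rep := funext hΘ
  refine exists_eq_mul_map_iff_of_lcrm (skewInvolution_mul hn hx hxn hrep)
    (skewInvolution_involutive hn hx hxn hrep) (fun i _ => ?_) hh hh'
  have hγi : (⇑σ)^[i] γ ≠ 0 := by rwa [← RingAut.coe_pow, map_ne_zero]
  have hγ' : (σ ((⇑σ)^[i] γ))⁻¹ = (⇑σ)^[i] (σ γ)⁻¹ := by
    rw [← Function.iterate_succ_apply' σ, Function.iterate_succ_apply, ← RingAut.coe_pow,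
      map_inv₀]
  obtain ⟨u, hu⟩ := exists_units_pow_pred_sub_eq_mul hn hx hxn hγi
  refine ⟨u, ?_⟩
  rw [skewInvolution_sub_map hn hx hxn hrep, hu, hγ']

/-- Let `L` be a field with automorphism `σ` of finite order `n`,
`ℛ = L[x;σ]/⟨x^n − 1⟩` (presented abstractly: free left `L`-module on `1,…,x^{n-1}`
with `x·a = σ(a)·x` and `x^n = 1`), and `Θ` the involution
`Θ(Σ a_i x^i) = Σ σ^{-i}(a_i)x^{-i}` (with `x^{-1} = x^{n-1}`). If
`h = lcrm{x − σ^i(γ) : 0 ≤ i ≤ k−1}` in `ℛ` (in the sense that `hℛ` is the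
intersection of the right ideals `(x − σ^i(γ))ℛ`) and `γ' = σ(γ)⁻¹`, then
`ℛ·Θ(h) = ℛ·lclm{x − σ^i(γ') : 0 ≤ i ≤ k−1}` (same sense, on the left). -/
theorem stmt16 {L R : Type*} [Field L] [Ring R]
    (σ : L ≃+* L) (n : ℕ) (hn : 0 < n) (hσn : ∀ a : L, (⇑σ)^[n] a = a)
    (ι : L →+* R) (x : R) (hx : ∀ a : L, x * ι a = ι (σ a) * x) (hxn : x ^ n = 1)
    (rep : (Fin n → L) ≃+ R)
    (hrep : ∀ c : Fin n → L, rep c = ∑ i : Fin n, ι (c i) * x ^ (i : ℕ))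
    (Θ : R → R)
    (hΘ : ∀ r : R, Θ r = ∑ i : Fin n,
      ι ((⇑σ.symm)^[(i : ℕ)] (rep.symm r i)) * (x ^ (n - 1)) ^ (i : ℕ))
    (γ : L) (hγ0 : γ ≠ 0) (k : ℕ) (h h' : R)
    (hh : ∀ s : R, (∃ q, s = h * q) ↔ ∀ i < k, ∃ q, s = (x - ι ((⇑σ)^[i] γ)) * q)
    (hh' : ∀ s : R, (∃ q, s = q * h') ↔ ∀ i < k, ∃ q, s = q * (x - ι ((⇑σ)^[i] (σ γ)⁻¹))) :
    ∀ s : R, (∃ q, s = q * Θ h) ↔ (∃ q, s = q * h') :=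
  stmt16_general σ n hn ι x hx hxn rep hrep Θ hΘ γ hγ0 k h h' hh hh'
end

section
/- Let L be a field with automorphism σ, and for a ∈ L and i ≥ 0 define the i-th norm N_i(a) = a·σ(a)···σ^{i−1}(a). Then for any f = Σ_i f_i x^i ∈ L[x;σ], the remainder of right division of f by x − a equals Σ_i f_i N_i(a). -/
/-!
Since `x ^ (k+1) = x * x ^ k`, a right division `x ^ k = q * (x - a) + N_k(a)` yields
`x ^ (k+1) = (x q + σ(N_k a)) * (x - a) + σ(N_k a) a`, and `σ(N_k a) a = N_{k+1} a`;
summing over the monomials of `f` gives the remainder `Σ f_k N_k(a)`. It is unique because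
for `q ≠ 0` of degree `m` the coefficient of `q * (x - a)` in degree `m + 1` is `q_m ≠ 0`,
so `q * (x - a)` is a constant only when `q = 0`.
-/

open Finset

def iterNorm {L : Type*} [CommRing L] (σ : L →+* L) (a : L) (k : ℕ) : L :=
  ∏ j ∈ range k, σ^[j] a

section SkewDivision

variable {L S : Type*} [CommRing L] [Ring S] {σ : L →+* L} {ι : L →+* S} {x : S}

theorem iterNorm_succ (a : L) (k : ℕ) : iterNorm σ a (k + 1) = σ (iterNorm σ a k) * a := by
  simp only [iterNorm, prod_range_succ', Function.iterate_zero_apply, map_prod,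
    Function.iterate_succ_apply']

theorem pow_mul_eq_of_mul_eq (hx : ∀ b, x * ι b = ι (σ b) * x) (k : ℕ) (b : L) :
    x ^ k * ι b = ι (σ^[k] b) * x ^ k := by
  induction k generalizing b with
  | zero => simp
  | succ k ih =>
    rw [pow_succ', mul_assoc, ih, ← mul_assoc, hx, Function.iterate_succ_apply', mul_assoc]

theorem exists_pow_eq_mul_sub_add (hx : ∀ b, x * ι b = ι (σ b) * x) (a : L) (k : ℕ) :
    ∃ q, x ^ k = q * (x - ι a) + ι (iterNorm σ a k) := by
  induction k with
  | zero => exact ⟨0, by simp [iterNorm]⟩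
  | succ k ih =>
    obtain ⟨q, hq⟩ := ih
    refine ⟨x * q + ι (σ (iterNorm σ a k)), ?_⟩
    rw [pow_succ', hq, mul_add, ← mul_assoc, hx, iterNorm_succ, map_mul]
    noncomm_ring

theorem exists_sum_eq_mul_sub_add (hx : ∀ b, x * ι b = ι (σ b) * x) (a : L)
    (s : Finset ℕ) (c : ℕ → L) :
    ∃ q, ∑ k ∈ s, ι (c k) * x ^ k =
      q * (x - ι a) + ι (∑ k ∈ s, c k * iterNorm σ a k) := by
  choose q hq using exists_pow_eq_mul_sub_add hx a
  refine ⟨∑ k ∈ s, ι (c k) * q k, ?_⟩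
  rw [sum_mul, map_sum, ← sum_add_distrib]
  refine sum_congr rfl fun k _ => ?_
  rw [hq k, mul_add, ← map_mul, mul_assoc]

variable {rep : (ℕ →₀ L) ≃+ S}

theorem sum_rep_symm (hrep : ∀ p, rep p = ∑ k ∈ p.support, ι (p k) * x ^ k) (q : S) :
    ∑ k ∈ (rep.symm q).support, ι (rep.symm q k) * x ^ k = q := by
  rw [← hrep, rep.apply_symm_apply]

theorem rep_symm_monomial (hrep : ∀ p, rep p = ∑ k ∈ p.support, ι (p k) * x ^ k)
    (c : L) (k : ℕ) : rep.symm (ι c * x ^ k) = Finsupp.single k c := by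
  classical
  rw [rep.symm_apply_eq, hrep]
  by_cases hc : c = 0
  · simp [hc]
  · simp [Finsupp.support_single, hc]

theorem rep_symm_mul_sub_apply_succ (hx : ∀ b, x * ι b = ι (σ b) * x)
    (hrep : ∀ p, rep p = ∑ k ∈ p.support, ι (p k) * x ^ k) (q : S) (a : L) (n : ℕ) :
    rep.symm (q * (x - ι a)) (n + 1) = rep.symm q n - rep.symm q (n + 1) * σ^[n + 1] a := by
  classical
  set p := rep.symm q
  have hexpand : q * (x - ι a) =
      ∑ k ∈ p.support, (ι (p k) * x ^ (k + 1) - ι (p k * σ^[k] a) * x ^ k) := by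
    conv_lhs => rw [← sum_rep_symm hrep q]
    rw [sum_mul]
    refine sum_congr rfl fun k _ => ?_
    rw [mul_sub, pow_succ, map_mul, mul_assoc, mul_assoc, mul_assoc, pow_mul_eq_of_mul_eq hx]
  simp only [hexpand, map_sum, map_sub, rep_symm_monomial hrep, Finsupp.finsetSum_apply,
    Finsupp.sub_apply, Finsupp.single_apply, sum_sub_distrib, add_left_inj, sum_ite_eq',
    Finsupp.mem_support_iff]
  congr 1 <;> split_ifs <;> simp_all

theorem eq_zero_of_mul_sub_eq (hx : ∀ b, x * ι b = ι (σ b) * x)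
    (hrep : ∀ p, rep p = ∑ k ∈ p.support, ι (p k) * x ^ k) {q : S} {a c : L}
    (h : q * (x - ι a) = ι c) : c = 0 := by
  have hconst : rep.symm (q * (x - ι a)) = Finsupp.single 0 c := by
    rw [h, ← rep_symm_monomial hrep c 0, pow_zero, mul_one]
  by_cases hq : rep.symm q = 0
  · rwa [rep.symm.map_eq_zero_iff.mp hq, zero_mul, map_zero, eq_comm,
      Finsupp.single_eq_zero] at hconst
  · exfalso
    set m := (rep.symm q).support.max' (Finsupp.support_nonempty_iff.mpr hq)
    have hm : rep.symm q m ≠ 0 :=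
      Finsupp.mem_support_iff.mp ((rep.symm q).support.max'_mem _)
    have hm_succ : rep.symm q (m + 1) = 0 := by
      by_contra hne
      have := (rep.symm q).support.le_max' _ (Finsupp.mem_support_iff.mpr hne)
      omega
    have hcoeff := rep_symm_mul_sub_apply_succ hx hrep q a m
    rw [hconst, hm_succ, zero_mul, sub_zero, Finsupp.single_eq_of_ne (by omega)] at hcoeff
    exact hm hcoeff.symm

end SkewDivision

/-- Let `L` be a field with automorphism `σ`, and for `a ∈ L` let
`N_i(a) = a·σ(a)⋯σ^{i-1}(a)`. In the skew polynomial ring `L[x;σ]` (relation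
`x·a = σ(a)·x`, presented abstractly), for any `f = Σ_i f_i x^i`, the remainder of the
right division of `f` by `x − a` exists, is unique, and equals `Σ_i f_i N_i(a)`. -/
theorem stmt18 {L S : Type*} [Field L] [Ring S]
    (σ : L ≃+* L)
    (ι : L →+* S) (x : S) (hx : ∀ a : L, x * ι a = ι (σ a) * x)
    (rep : (ℕ →₀ L) ≃+ S)
    (hrep : ∀ p : ℕ →₀ L, rep p = ∑ k ∈ p.support, ι (p k) * x ^ k)
    (f : S) (a : L) :
    (∃ q : S, f = q * (x - ι a)
        + ι (∑ k ∈ (rep.symm f).support,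
            (rep.symm f) k * ∏ j ∈ Finset.range k, (⇑σ)^[j] a)) ∧
    ∀ (q : S) (r : L), f = q * (x - ι a) + ι r →
      r = ∑ k ∈ (rep.symm f).support,
        (rep.symm f) k * ∏ j ∈ Finset.range k, (⇑σ)^[j] a := by
  obtain ⟨q₀, hq₀⟩ := exists_sum_eq_mul_sub_add (σ := (σ : L →+* L)) hx a
    (rep.symm f).support (rep.symm f)
  rw [sum_rep_symm hrep] at hq₀
  refine ⟨⟨q₀, hq₀⟩, fun q r hr => ?_⟩
  have hdiff : (q₀ - q) * (x - ι a)
      = ι (r - ∑ k ∈ (rep.symm f).support, rep.symm f k * iterNorm (σ : L →+* L) a k) := by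
    rw [map_sub, sub_mul, sub_eq_sub_iff_add_eq_add, ← hq₀, hr, add_comm]
  exact sub_eq_zero.mp (eq_zero_of_mul_sub_eq (σ := (σ : L →+* L)) hx hrep hdiff)
end
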